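/- arXiv:2401.10807 — 6 statements merged into one kernel-verified Lean document; each statement's English description precedes it below -/
import Mathlib

section
/- Let A be a compact self-adjoint bounded linear operator on a complex Hilbert space H with ‖A‖ ≤ 1, and suppose A = P − Q where P and Q are orthogonal projections on H. If λ ∈ σ(A) and λ ∉ {0, 1, −1}, then −λ ∈ σ(A) and dim ker(A − λI) = dim ker(A + λI) (both eigenspaces being finite-dimensional). -/
open ContinuousLinearMap

section Defs

variable {H : Type*} [NormedAddCommGroup H] [InnerProductSpace ℂ H] [CompleteSpace H]

/-- The defect operator `C(V₁, V₂) = I - V₁V₁* - V₂V₂* + V₁V₂V₁*V₂*` of a pair of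
operators on a complex Hilbert space. -/
noncomputable def defectOp (V₁ V₂ : H →L[ℂ] H) : H →L[ℂ] H :=
  1 - V₁ ∘L adjoint V₁ - V₂ ∘L adjoint V₂ + V₁ ∘L V₂ ∘L adjoint V₁ ∘L adjoint V₂

/-- The cross-commutator `[V₂*, V₁] = V₂*V₁ - V₁V₂*`. -/
noncomputable def crossComm (V₁ V₂ : H →L[ℂ] H) : H →L[ℂ] H :=
  adjoint V₂ ∘L V₁ - V₁ ∘L adjoint V₂

/-- An isometric pair: both operators are isometries and they commute. -/
def IsIsometricPair (V₁ V₂ : H →L[ℂ] H) : Prop :=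
  (∀ x : H, ‖V₁ x‖ = ‖x‖) ∧ (∀ x : H, ‖V₂ x‖ = ‖x‖) ∧ V₁ ∘L V₂ = V₂ ∘L V₁

/-- A shift: an isometry `V` such that `(V*)^n x → 0` for every `x`. -/
def IsShift (V : H →L[ℂ] H) : Prop :=
  (∀ x : H, ‖V x‖ = ‖x‖) ∧
    ∀ x : H, Filter.Tendsto (fun n : ℕ => (adjoint V ^ n) x) Filter.atTop (nhds 0)

/-- A BCL pair: an isometric pair whose product is a shift. -/
def IsBCLPair (V₁ V₂ : H →L[ℂ] H) : Prop :=
  IsIsometricPair V₁ V₂ ∧ IsShift (V₁ ∘L V₂)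

/-- A compact normal pair: a BCL pair whose cross-commutator is compact and normal. -/
def IsCompactNormalPair (V₁ V₂ : H →L[ℂ] H) : Prop :=
  IsBCLPair V₁ V₂ ∧ IsCompactOperator ⇑(crossComm V₁ V₂) ∧
    crossComm V₁ V₂ ∘L adjoint (crossComm V₁ V₂) =
      adjoint (crossComm V₁ V₂) ∘L crossComm V₁ V₂

/-- A subspace reduces the pair `(V₁, V₂)` if it is invariant under `V₁, V₂, V₁*, V₂*`. -/
def ReducesPair (V₁ V₂ : H →L[ℂ] H) (S : Submodule ℂ H) : Prop :=
  (∀ x ∈ S, V₁ x ∈ S) ∧ (∀ x ∈ S, V₂ x ∈ S) ∧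
    (∀ x ∈ S, adjoint V₁ x ∈ S) ∧ (∀ x ∈ S, adjoint V₂ x ∈ S)

/-- A pair is irreducible if its only closed reducing subspaces are `⊥` and `⊤`. -/
def IsIrreduciblePair (V₁ V₂ : H →L[ℂ] H) : Prop :=
  ∀ S : Submodule ℂ H, IsClosed (S : Set H) → ReducesPair V₁ V₂ S → S = ⊥ ∨ S = ⊤

/-- An `n`-finite pair: a compact normal pair whose defect operator has `n`-dimensional
range. -/
def IsNFinitePair (n : ℕ) (V₁ V₂ : H →L[ℂ] H) : Prop :=
  IsCompactNormalPair V₁ V₂ ∧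
    Module.rank ℂ (LinearMap.range (defectOp V₁ V₂ : H →ₗ[ℂ] H)) = n

end Defs

/-!
With `B = 1 - P - Q`, idempotency of `P` and `Q` gives `AB = -BA` and `B² = 1 - A²`. Hence `B`
maps the `λ`-eigenspace of `A` to the `(-λ)`-eigenspace, and it is injective there because
`B²` acts on it as the nonzero scalar `1 - λ²`; by symmetry the two eigenspaces have the same
dimension. Compactness makes these eigenspaces finite-dimensional and, by the Fredholm
alternative, turns the nonzero spectral value `λ` into an eigenvalue.
-/

section Idempotent

variable {R : Type*} [Ring R] {p q : R}

theorem IsIdempotentElem.sub_mul_one_sub_sub (hp : IsIdempotentElem p) (hq : IsIdempotentElem q) :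
    (p - q) * (1 - p - q) = -((1 - p - q) * (p - q)) := by
  simp only [mul_sub, sub_mul, mul_one, one_mul, hp.eq, hq.eq]
  abel

theorem IsIdempotentElem.one_sub_sub_mul_self (hp : IsIdempotentElem p)
    (hq : IsIdempotentElem q) : (1 - p - q) * (1 - p - q) = 1 - (p - q) * (p - q) := by
  simp only [mul_sub, sub_mul, mul_one, one_mul, hp.eq, hq.eq]
  abel

end Idempotent

namespace Module.End

variable {K V : Type*} [Field K] [AddCommGroup V] [Module K V] {f g : End K V} {μ : K} {x : V}

theorem apply_mem_eigenspace_neg (hfg : f * g = -(g * f)) (hx : x ∈ f.eigenspace μ) :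
    g x ∈ f.eigenspace (-μ) := by
  rw [mem_eigenspace_iff] at hx ⊢
  rw [← mul_apply, hfg, LinearMap.neg_apply, mul_apply, hx, map_smul, neg_smul]

theorem apply_apply_of_mem_eigenspace (hgg : g * g = 1 - f * f) (hx : x ∈ f.eigenspace μ) :
    g (g x) = (1 - μ * μ) • x := by
  rw [mem_eigenspace_iff] at hx
  rw [← mul_apply, hgg, LinearMap.sub_apply, one_apply, mul_apply, hx, map_smul, hx, smul_smul,
    sub_smul, one_smul]

theorem apply_ne_zero_of_mem_eigenspace (hgg : g * g = 1 - f * f) (hμ : μ * μ ≠ 1)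
    (hx : x ∈ f.eigenspace μ) (hx0 : x ≠ 0) : g x ≠ 0 := by
  intro hgx
  have : (1 - μ * μ) • x = 0 := by rw [← apply_apply_of_mem_eigenspace hgg hx, hgx, map_zero]
  exact hx0 ((smul_eq_zero.mp this).resolve_left (sub_ne_zero.mpr hμ.symm))

theorem HasEigenvalue.neg_of_anticomm (hfg : f * g = -(g * f)) (hgg : g * g = 1 - f * f)
    (hμ : μ * μ ≠ 1) (h : f.HasEigenvalue μ) : f.HasEigenvalue (-μ) := by
  obtain ⟨x, hx, hx0⟩ := h.exists_hasEigenvector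
  exact hasEigenvalue_of_hasEigenvector
    ⟨apply_mem_eigenspace_neg hfg hx, apply_ne_zero_of_mem_eigenspace hgg hμ hx hx0⟩

theorem finrank_eigenspace_le_neg (hfg : f * g = -(g * f)) (hgg : g * g = 1 - f * f)
    (hμ : μ * μ ≠ 1) [FiniteDimensional K (f.eigenspace (-μ))] :
    Module.finrank K (f.eigenspace μ) ≤ Module.finrank K (f.eigenspace (-μ)) := by
  refine LinearMap.finrank_le_finrank_of_injective
    (f := g.restrict fun _ ↦ apply_mem_eigenspace_neg hfg) ?_
  rw [← LinearMap.ker_eq_bot, LinearMap.ker_eq_bot']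
  intro x hx
  by_contra hx0
  exact apply_ne_zero_of_mem_eigenspace hgg hμ x.2 (Submodule.coe_eq_zero.not.mpr hx0)
    (congrArg Subtype.val hx)

theorem finrank_eigenspace_neg (hfg : f * g = -(g * f)) (hgg : g * g = 1 - f * f)
    (hμ : μ * μ ≠ 1) [FiniteDimensional K (f.eigenspace μ)]
    [FiniteDimensional K (f.eigenspace (-μ))] :
    Module.finrank K (f.eigenspace (-μ)) = Module.finrank K (f.eigenspace μ) := by
  refine le_antisymm ?_ (finrank_eigenspace_le_neg hfg hgg hμ)
  have : FiniteDimensional K (f.eigenspace (- -μ)) := by rwa [neg_neg]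
  have := finrank_eigenspace_le_neg (μ := -μ) hfg hgg (by rwa [neg_mul_neg])
  rwa [neg_neg] at this

end Module.End

namespace ContinuousLinearMap

variable {𝕜 E : Type*} [CommRing 𝕜] [AddCommGroup E] [Module 𝕜 E] [TopologicalSpace E]
  [ContinuousConstSMul 𝕜 E] [IsTopologicalAddGroup E]

theorem ker_sub_smul_one (A : E →L[𝕜] E) (μ : 𝕜) :
    LinearMap.ker ((A - μ • 1 : E →L[𝕜] E) : E →ₗ[𝕜] E) =
      Module.End.eigenspace (A : Module.End 𝕜 E) μ := by
  rw [Module.End.eigenspace_def]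
  rfl

theorem ker_add_smul_one (A : E →L[𝕜] E) (μ : 𝕜) :
    LinearMap.ker ((A + μ • 1 : E →L[𝕜] E) : E →ₗ[𝕜] E) =
      Module.End.eigenspace (A : Module.End 𝕜 E) (-μ) := by
  rw [← ker_sub_smul_one, neg_smul, sub_neg_eq_add]

end ContinuousLinearMap

theorem stmt_0_general {H : Type*} [NormedAddCommGroup H] [InnerProductSpace ℂ H] [CompleteSpace H]
    (A P Q : H →L[ℂ] H)
    (hAcompact : IsCompactOperator ⇑A)
    (hPproj : P ∘L P = P)
    (hQproj : Q ∘L Q = Q)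
    (hA : A = P - Q)
    (lam : ℂ) (hlam : lam ∈ spectrum ℂ A)
    (h0 : lam ≠ 0) (h1 : lam ≠ 1) (hm1 : lam ≠ -1) :
    -lam ∈ spectrum ℂ A ∧
      FiniteDimensional ℂ (LinearMap.ker ((A - lam • (1 : H →L[ℂ] H) : H →L[ℂ] H) : H →ₗ[ℂ] H)) ∧
      FiniteDimensional ℂ (LinearMap.ker ((A + lam • (1 : H →L[ℂ] H) : H →L[ℂ] H) : H →ₗ[ℂ] H)) ∧
      Module.finrank ℂ (LinearMap.ker ((A - lam • (1 : H →L[ℂ] H) : H →L[ℂ] H) : H →ₗ[ℂ] H)) =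
        Module.finrank ℂ (LinearMap.ker ((A + lam • (1 : H →L[ℂ] H) : H →L[ℂ] H) : H →ₗ[ℂ] H)) := by
  have hP : IsIdempotentElem (P : Module.End ℂ H) := congrArg toLinearMap hPproj
  have hQ : IsIdempotentElem (Q : Module.End ℂ H) := congrArg toLinearMap hQproj
  have hAPQ : (A : Module.End ℂ H) = P - Q := by rw [hA]; rfl
  have hanti := hP.sub_mul_one_sub_sub hQ
  have hsq := hP.one_sub_sub_mul_self hQ
  rw [← hAPQ] at hanti hsq
  have hμ : lam * lam ≠ 1 := mul_self_eq_one_iff.not.mpr (not_or.mpr ⟨h1, hm1⟩)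
  have hfin : ∀ μ ≠ 0, FiniteDimensional ℂ (Module.End.eigenspace (A : Module.End ℂ H) μ) :=
    A.finite_dimensional_eigenspace hAcompact
  have := hfin lam h0
  have := hfin (-lam) (neg_ne_zero.mpr h0)
  rw [ker_sub_smul_one, ker_add_smul_one]
  refine ⟨?_, inferInstance, inferInstance, (Module.End.finrank_eigenspace_neg hanti hsq hμ).symm⟩
  rw [← hAcompact.hasEigenvalue_iff_mem_spectrum (neg_ne_zero.mpr h0)]
  exact ((hAcompact.hasEigenvalue_iff_mem_spectrum h0).mpr hlam).neg_of_anticomm hanti hsq hμ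

/-- A compact self-adjoint contraction which is a difference of two
orthogonal projections has symmetric eigenvalues away from `0, ±1`, with eigenspaces of
equal (finite) dimension. -/
theorem stmt_0 {H : Type*} [NormedAddCommGroup H] [InnerProductSpace ℂ H] [CompleteSpace H]
    (A P Q : H →L[ℂ] H)
    (hAcompact : IsCompactOperator ⇑A)
    (hAsa : IsSelfAdjoint A)
    (hAnorm : ‖A‖ ≤ 1)
    (hPsa : IsSelfAdjoint P) (hPproj : P ∘L P = P)
    (hQsa : IsSelfAdjoint Q) (hQproj : Q ∘L Q = Q)
    (hA : A = P - Q)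
    (lam : ℂ) (hlam : lam ∈ spectrum ℂ A)
    (h0 : lam ≠ 0) (h1 : lam ≠ 1) (hm1 : lam ≠ -1) :
    -lam ∈ spectrum ℂ A ∧
      FiniteDimensional ℂ (LinearMap.ker ((A - lam • (1 : H →L[ℂ] H) : H →L[ℂ] H) : H →ₗ[ℂ] H)) ∧
      FiniteDimensional ℂ (LinearMap.ker ((A + lam • (1 : H →L[ℂ] H) : H →L[ℂ] H) : H →ₗ[ℂ] H)) ∧
      Module.finrank ℂ (LinearMap.ker ((A - lam • (1 : H →L[ℂ] H) : H →L[ℂ] H) : H →ₗ[ℂ] H)) =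
        Module.finrank ℂ (LinearMap.ker ((A + lam • (1 : H →L[ℂ] H) : H →L[ℂ] H) : H →ₗ[ℂ] H)) :=
  stmt_0_general A P Q hAcompact hPproj hQproj hA lam hlam h0 h1 hm1
end

section
/- Let K be a complex Hilbert space, let D be a positive self-adjoint bounded operator on K with ‖D‖ ≤ 1 such that I − D is injective, and let U be a unitary operator on K commuting with D. On the Hilbert space K ⊕ K define the block operators P_U = (1/2)·[[I + D, U(I − D²)^{1/2}], [U*(I − D²)^{1/2}, I − D]] and Q_U = (1/2)·[[I − D, U(I − D²)^{1/2}], [U*(I − D²)^{1/2}, I + D]]. Then rank P_U = rank Q_U = dim K, where rank denotes the dimension of the range of the operator and dim K the Hilbert-space dimension of K. -/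
open ContinuousLinearMap

section AuxCommute

open Polynomial

variable {K : Type*} [NormedAddCommGroup K] [InnerProductSpace ℂ K] [CompleteSpace K]

lemma commute_cfc_aux {a b : K →L[ℂ] K} (ha : IsSelfAdjoint a) (hab : Commute b a)
    (f : ℝ → ℝ) : Commute b (cfc f a) := by
  by_cases hf : ContinuousOn f (spectrum ℝ a)
  · rw [cfc_apply f a ha hf]
    suffices h : ∀ g : C(spectrum ℝ a, ℝ), Commute b (cfcHom ha g) from h _
    intro g
    let T : Subalgebra ℝ C(spectrum ℝ a, ℝ) :=
      { carrier := {g | Commute b (cfcHom ha g)}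
        mul_mem' := fun hx hy => by
          show Commute b (cfcHom ha (_ * _))
          rw [map_mul]; exact hx.mul_right hy
        add_mem' := fun hx hy => by
          show Commute b (cfcHom ha (_ + _))
          rw [map_add]; exact hx.add_right hy
        algebraMap_mem' := fun r => by
          show Commute b (cfcHom ha (algebraMap ℝ C(spectrum ℝ a, ℝ) r))
          rw [AlgHomClass.commutes]
          exact Algebra.commute_algebraMap_right r b }
    have hT : IsClosed (T : Set C(spectrum ℝ a, ℝ)) := by
      have h1 : (T : Set C(spectrum ℝ a, ℝ)) =
          (fun g => b * cfcHom ha g - cfcHom ha g * b) ⁻¹' {0} := by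
        ext g
        simp only [Set.mem_preimage, Set.mem_singleton_iff, sub_eq_zero]
        rfl
      rw [h1]
      refine IsClosed.preimage ?_ isClosed_singleton
      have hc : Continuous (cfcHom ha (R := ℝ)) := (cfcHom_isClosedEmbedding ha).continuous
      fun_prop
    have hX : (Polynomial.toContinuousMapOnAlgHom (spectrum ℝ a)) Polynomial.X ∈ T := by
      show Commute b (cfcHom ha _)
      have h2 : (Polynomial.toContinuousMapOnAlgHom (spectrum ℝ a)) Polynomial.X
          = ContinuousMap.restrict (spectrum ℝ a) (ContinuousMap.id ℝ) := by
        ext x; simp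
      rw [h2, cfcHom_id ha]
      exact hab
    have hle : polynomialFunctions (spectrum ℝ a) ≤ T := by
      rw [polynomialFunctions.eq_adjoin_X]
      exact Algebra.adjoin_le (by simpa using hX)
    have htop : (⊤ : Subalgebra ℝ C(spectrum ℝ a, ℝ)) ≤ T := by
      rw [← polynomialFunctions.topologicalClosure (spectrum ℝ a)]
      exact Subalgebra.topologicalClosure_minimal hle hT
    exact htop (by trivial)
  · rw [cfc_apply_of_not_continuousOn a hf]
    exact Commute.zero_right b

set_option synthInstance.maxHeartbeats 1000000 in
set_option maxHeartbeats 1000000 in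
lemma commute_of_commute_sq {a S b : K →L[ℂ] K} (hS : S.IsPositive) (ha : (0:K →L[ℂ] K) ≤ a)
    (hsq : S * S = a) (hab : Commute b a) : Commute b S := by
  have hS' : (0 : K →L[ℂ] K) ≤ S := (nonneg_iff_isPositive S).2 hS
  have hsqrt : CFC.sqrt a = S := CFC.sqrt_unique hsq hS'
  rw [← hsqrt, CFC.sqrt_eq_cfc, cfc_nnreal_eq_real NNReal.sqrt a ha]
  exact commute_cfc_aux (.of_nonneg ha) hab _

end AuxCommute

/-- The ranks of the projections `P_U` and `Q_U` appearing in the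
canonical representation of a difference of two projections both equal `dim K`. Here
`S` is the positive square root of `I - D²`. -/
theorem stmt_2 {K : Type*} [NormedAddCommGroup K] [InnerProductSpace ℂ K] [CompleteSpace K]
    (D U S : K →L[ℂ] K)
    (hDpos : D.IsPositive) (hDnorm : ‖D‖ ≤ 1)
    (hDinj : Function.Injective ⇑((1 : K →L[ℂ] K) - D))
    (hU : U ∘L adjoint U = 1) (hU' : adjoint U ∘L U = 1)
    (hUD : U ∘L D = D ∘L U)
    (hSpos : S.IsPositive) (hSsq : S ∘L S = 1 - D ∘L D)
    (P Q : WithLp 2 (K × K) →L[ℂ] WithLp 2 (K × K))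
    (hP : ∀ x y : K, P ((WithLp.equiv 2 (K × K)).symm (x, y)) =
      (WithLp.equiv 2 (K × K)).symm
        ((2⁻¹ : ℂ) • ((x + D x) + U (S y)), (2⁻¹ : ℂ) • (adjoint U (S x) + (y - D y))))
    (hQ : ∀ x y : K, Q ((WithLp.equiv 2 (K × K)).symm (x, y)) =
      (WithLp.equiv 2 (K × K)).symm
        ((2⁻¹ : ℂ) • ((x - D x) + U (S y)), (2⁻¹ : ℂ) • (adjoint U (S x) + (y + D y)))) :
    Module.rank ℂ (LinearMap.range (P : WithLp 2 (K × K) →ₗ[ℂ] WithLp 2 (K × K))) = Module.rank ℂ K ∧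
      Module.rank ℂ (LinearMap.range (Q : WithLp 2 (K × K) →ₗ[ℂ] WithLp 2 (K × K))) = Module.rank ℂ K := by
    classical
  -- basic selfadjointness
  have hDsa := hDpos.isSelfAdjoint
  have hSsa := hSpos.isSelfAdjoint
  -- commutation of S with D and U
  have hamul : S * S = 1 - D * D := by
    rw [mul_def, mul_def]; exact hSsq
  have ha : (0 : K →L[ℂ] K) ≤ 1 - D * D := by
    rw [← hamul]
    have h := star_mul_self_nonneg S
    rwa [hSsa.star_eq] at h
  have hDa : Commute D (1 - D * D) :=
    (Commute.one_right D).sub_right ((Commute.refl D).mul_right (Commute.refl D))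
  have hUDc : Commute U D := by
    show U * D = D * U
    rw [mul_def, mul_def]; exact hUD
  have hUa : Commute U (1 - D * D) :=
    (Commute.one_right U).sub_right (hUDc.mul_right hUDc)
  have hDS : Commute D S := commute_of_commute_sq hSpos ha hamul hDa
  have hUS : Commute U S := commute_of_commute_sq hSpos ha hamul hUa
  -- pointwise versions
  have hSDv : ∀ v, S (D v) = D (S v) := by
    intro v; show (S * D) v = (D * S) v; rw [hDS.eq]
  have hUSv : ∀ v, U (S v) = S (U v) := by
    intro v; show (U * S) v = (S * U) v; rw [hUS.eq]
  have hUDv : ∀ v, U (D v) = D (U v) := by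
    intro v; show (U * D) v = (D * U) v; rw [hUDc.eq]
  have hDU'c : D * adjoint U = adjoint U * D := by
    have h := congrArg star hUDc.eq
    rwa [star_mul, star_mul, hDsa.star_eq, star_eq_adjoint] at h
  have hU'Dv : ∀ v, adjoint U (D v) = D (adjoint U v) := by
    intro v; show (adjoint U * D) v = (D * adjoint U) v; rw [hDU'c]
  have hSU'c : S * adjoint U = adjoint U * S := by
    have h := congrArg star hUS.eq
    rwa [star_mul, star_mul, hSsa.star_eq, star_eq_adjoint] at h
  have hU'Sv : ∀ v, adjoint U (S v) = S (adjoint U v) := by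
    intro v; show (adjoint U * S) v = (S * adjoint U) v; rw [hSU'c]
  have hU'Uv : ∀ v, adjoint U (U v) = v := by
    intro v
    have h : (adjoint U ∘L U) v = (1 : K →L[ℂ] K) v := by rw [hU']
    simpa using h
  have hUU'v : ∀ v, U (adjoint U v) = v := by
    intro v
    have h : (U ∘L adjoint U) v = (1 : K →L[ℂ] K) v := by rw [hU]
    simpa using h
  have hSSv : ∀ v, S (S v) = v - D (D v) := by
    intro v
    have h : (S ∘L S) v = ((1 : K →L[ℂ] K) - D ∘L D) v := by rw [hSsq]
    simpa using h
  -- injectivity of 1 + D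
  have h1D : ∀ z : K, z + D z = 0 → z = 0 := by
    intro z hz
    have h0 : D z = -z := eq_neg_of_add_eq_zero_right hz
    have h2 := hDpos.re_inner_nonneg_left z
    rw [h0, inner_neg_left, map_neg, inner_self_eq_norm_sq] at h2
    have h3 : ‖z‖ = 0 := by nlinarith [sq_nonneg ‖z‖]
    simpa using h3
  -- component projections
  set F1 : WithLp 2 (K × K) →ₗ[ℂ] K :=
    (LinearMap.fst ℂ K K).comp (WithLp.linearEquiv 2 ℂ (K × K)).toLinearMap with hF1
  set F2 : WithLp 2 (K × K) →ₗ[ℂ] K :=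
    (LinearMap.snd ℂ K K).comp (WithLp.linearEquiv 2 ℂ (K × K)).toLinearMap with hF2
  have hF1ap : ∀ a b : K, F1 ((WithLp.equiv 2 (K × K)).symm (a, b)) = a := fun _ _ => rfl
  have hF2ap : ∀ a b : K, F2 ((WithLp.equiv 2 (K × K)).symm (a, b)) = b := fun _ _ => rfl
  have hvs : ∀ v : WithLp 2 (K × K),
      v = (WithLp.equiv 2 (K × K)).symm (F1 v, F2 v) := by
    intro v; rfl
  -- the key relation on the range of P
  have hrelP : ∀ v ∈ LinearMap.range (P : WithLp 2 (K × K) →ₗ[ℂ] WithLp 2 (K × K)), S (adjoint U (F1 v)) = F2 v + D (F2 v) := by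
    rintro v ⟨w, rfl⟩
    have hw := hP (F1 w) (F2 w)
    rw [← hvs w] at hw
    rw [ContinuousLinearMap.coe_coe, hw, hF1ap, hF2ap]
    set x := F1 w
    set y := F2 w
    simp only [map_smul, map_add, map_sub, hU'Dv, hU'Uv, hU'Sv, hSDv, hSSv]
    module
  have hrelQ : ∀ v ∈ LinearMap.range (Q : WithLp 2 (K × K) →ₗ[ℂ] WithLp 2 (K × K)), U (S (F2 v)) = F1 v + D (F1 v) := by
    rintro v ⟨w, rfl⟩
    have hw := hQ (F1 w) (F2 w)
    rw [← hvs w] at hw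
    rw [ContinuousLinearMap.coe_coe, hw, hF1ap, hF2ap]
    set x := F1 w
    set y := F2 w
    simp only [map_smul, map_add, map_sub, hU'Sv, hUSv, hUDv, hSDv, hSSv, hUU'v, hU'Dv]
    module
  -- upper bounds
  have hupP : Module.rank ℂ (LinearMap.range (P : WithLp 2 (K × K) →ₗ[ℂ] WithLp 2 (K × K))) ≤ Module.rank ℂ K := by
    have hinj : Function.Injective
        (F1.comp (LinearMap.range (P : WithLp 2 (K × K) →ₗ[ℂ] WithLp 2 (K × K))).subtype) := by
      rw [injective_iff_map_eq_zero]
      rintro ⟨v, hv⟩ h0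
      have h0' : F1 v = 0 := h0
      have h2 := hrelP v hv
      rw [h0'] at h2
      simp only [map_zero] at h2
      have h3 : F2 v = 0 := h1D _ h2.symm
      have : v = 0 := by rw [hvs v, h0', h3]; rfl
      exact Subtype.ext this
    exact LinearMap.rank_le_of_injective _ hinj
  have hupQ : Module.rank ℂ (LinearMap.range (Q : WithLp 2 (K × K) →ₗ[ℂ] WithLp 2 (K × K))) ≤ Module.rank ℂ K := by
    have hinj : Function.Injective
        (F2.comp (LinearMap.range (Q : WithLp 2 (K × K) →ₗ[ℂ] WithLp 2 (K × K))).subtype) := by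
      rw [injective_iff_map_eq_zero]
      rintro ⟨v, hv⟩ h0
      have h0' : F2 v = 0 := h0
      have h2 := hrelQ v hv
      rw [h0'] at h2
      simp only [map_zero] at h2
      have h3 : F1 v = 0 := h1D _ h2.symm
      have : v = 0 := by rw [hvs v, h0', h3]; rfl
      exact Subtype.ext this
    exact LinearMap.rank_le_of_injective _ hinj
  -- lower bounds
  have hhalf : (2⁻¹ : ℂ) ≠ 0 := by norm_num
  have hlowP : Module.rank ℂ K ≤ Module.rank ℂ (LinearMap.range (P : WithLp 2 (K × K) →ₗ[ℂ] WithLp 2 (K × K))) := by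
    let ι : K →ₗ[ℂ] WithLp 2 (K × K) :=
      ((WithLp.linearEquiv 2 ℂ (K × K)).symm.toLinearMap).comp (LinearMap.inl ℂ K K)
    let j : K →ₗ[ℂ] WithLp 2 (K × K) := (P : WithLp 2 (K × K) →ₗ[ℂ] WithLp 2 (K × K)).comp ι
    have hjmem : ∀ x : K, j x ∈ LinearMap.range (P : WithLp 2 (K × K) →ₗ[ℂ] WithLp 2 (K × K)) := fun x => ⟨ι x, rfl⟩
    have hjP : ∀ x : K, j x = P ((WithLp.equiv 2 (K × K)).symm (x, 0)) := fun x => rfl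
    have hinj : Function.Injective (j.codRestrict (LinearMap.range (P : WithLp 2 (K × K) →ₗ[ℂ] WithLp 2 (K × K))) hjmem) := by
      rw [injective_iff_map_eq_zero]
      intro x h0
      have h0' : j x = 0 := congrArg Subtype.val h0
      have h1 : F1 (j x) = 0 := by rw [h0']; simp
      rw [hjP x, hP x 0] at h1
      simp only [map_zero, add_zero, hF1ap] at h1
      rcases smul_eq_zero.mp h1 with h | h
      · exact absurd h hhalf
      · exact h1D x h
    exact LinearMap.rank_le_of_injective _ hinj
  have hlowQ : Module.rank ℂ K ≤ Module.rank ℂ (LinearMap.range (Q : WithLp 2 (K × K) →ₗ[ℂ] WithLp 2 (K × K))) := by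
    let ι : K →ₗ[ℂ] WithLp 2 (K × K) :=
      ((WithLp.linearEquiv 2 ℂ (K × K)).symm.toLinearMap).comp (LinearMap.inr ℂ K K)
    let j : K →ₗ[ℂ] WithLp 2 (K × K) := (Q : WithLp 2 (K × K) →ₗ[ℂ] WithLp 2 (K × K)).comp ι
    have hjmem : ∀ y : K, j y ∈ LinearMap.range (Q : WithLp 2 (K × K) →ₗ[ℂ] WithLp 2 (K × K)) := fun y => ⟨ι y, rfl⟩
    have hjQ : ∀ y : K, j y = Q ((WithLp.equiv 2 (K × K)).symm (0, y)) := fun y => rfl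
    have hinj : Function.Injective (j.codRestrict (LinearMap.range (Q : WithLp 2 (K × K) →ₗ[ℂ] WithLp 2 (K × K))) hjmem) := by
      rw [injective_iff_map_eq_zero]
      intro y h0
      have h0' : j y = 0 := congrArg Subtype.val h0
      have h1 : F2 (j y) = 0 := by rw [h0']; simp
      rw [hjQ y, hQ 0 y] at h1
      simp only [map_zero, zero_add, hF2ap] at h1
      rcases smul_eq_zero.mp h1 with h | h
      · exact absurd h hhalf
      · exact h1D y h
    exact LinearMap.rank_le_of_injective _ hinj
  exact ⟨le_antisymm hupP hlowP, le_antisymm hupQ hlowQ⟩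
end

section
/- Let (V1, V2) be an isometric pair on a complex Hilbert space H such that E_1 := ker(C(V1, V2) − I) is finite-dimensional and the cross-commutator [V2*, V1] has finite rank. Then the defect operator C(V1, V2) has finite rank. -/
open ContinuousLinearMap
open scoped InnerProductSpace

section Aux

variable {H : Type*} [NormedAddCommGroup H] [InnerProductSpace ℂ H] [CompleteSpace H]

lemma ring_aux {A : Type*} [Ring A] {p r : A} (hp : p*p = p) (hr : r*r = r) :
    (p - r) - (p-r)^3 = (p*r - r*p)*(p+r-1) := by
  have hp' : ∀ x : A, p * (p * x) = p * x := fun x => by rw [← mul_assoc, hp]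
  have hr' : ∀ x : A, r * (r * x) = r * x := fun x => by rw [← mul_assoc, hr]
  simp only [pow_succ, pow_zero, one_mul, mul_sub, sub_mul, mul_add, add_mul, mul_one,
    hp, hr, hp', hr', mul_assoc]
  abel

lemma proj_inner {e : H →L[ℂ] H} (he : e * e = e) (hes : adjoint e = e) (x : H) :
    ⟪e x, x⟫_ℂ = (‖e x‖ : ℂ)^2 := by
  have h1 : e x = e (e x) := by rw [← ContinuousLinearMap.mul_apply, he]
  rw [h1]
  nth_rewrite 1 [← hes]
  rw [adjoint_inner_left, ← h1, inner_self_eq_norm_sq_to_K]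
  rfl

lemma proj_eigen {e f : H →L[ℂ] H} (he : e * e = e) (hes : adjoint e = e)
    (hf : f * f = f) (hfs : adjoint f = f) {x : H} (hx : e x = f x + x) :
    f x = 0 ∧ e x = x := by
  have hie := proj_inner he hes x
  have hif := proj_inner hf hfs x
  have hxx : ⟪x, x⟫_ℂ = (‖x‖ : ℂ)^2 := by rw [inner_self_eq_norm_sq_to_K]; rfl
  have hsum : (‖e x‖ : ℂ)^2 = (‖f x‖ : ℂ)^2 + (‖x‖ : ℂ)^2 := by
    rw [← hie, ← hif, ← hxx, hx, inner_add_left]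
  have hsum' : ‖e x‖^2 = ‖f x‖^2 + ‖x‖^2 := by exact_mod_cast hsum
  have hcs : ‖e x‖^2 ≤ ‖e x‖ * ‖x‖ := by
    have h2 : ‖(⟪e x, x⟫_ℂ)‖ = ‖e x‖^2 := by simp [hie, norm_pow]
    have h3 := norm_inner_le_norm (𝕜 := ℂ) (e x) x
    rw [h2] at h3
    exact h3
  have n1 := norm_nonneg (e x)
  have n2 := norm_nonneg (f x)
  have n3 := norm_nonneg x
  have n4 := sq_nonneg (‖e x‖ - ‖x‖)
  have h0 : ‖f x‖ = 0 := by nlinarith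
  have hf0 : f x = 0 := norm_eq_zero.mp h0
  exact ⟨hf0, by rw [hx, hf0, zero_add]⟩

end Aux


set_option maxHeartbeats 1000000 in
/-- If `E₁ = ker (C(V₁,V₂) - I)` is finite-dimensional and the
cross-commutator has finite rank, then the defect operator has finite rank. -/
theorem stmt_4 {H : Type*} [NormedAddCommGroup H] [InnerProductSpace ℂ H] [CompleteSpace H]
    (V₁ V₂ : H →L[ℂ] H)
    (hpair : IsIsometricPair V₁ V₂)
    (hE1 : FiniteDimensional ℂ (LinearMap.ker ((defectOp V₁ V₂ - 1 : H →L[ℂ] H) : H →ₗ[ℂ] H)))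
    (hcross : FiniteDimensional ℂ (LinearMap.range (crossComm V₁ V₂ : H →ₗ[ℂ] H))) :
    FiniteDimensional ℂ (LinearMap.range (defectOp V₁ V₂ : H →ₗ[ℂ] H)) := by
  obtain ⟨h1, h2, hcm⟩ := hpair
  haveI := hE1
  haveI := hcross
  set A₁ := adjoint V₁ with hA₁def
  set A₂ := adjoint V₂ with hA₂def
  -- basic relations
  have hs1 : A₁ ∘L V₁ = 1 := (norm_map_iff_adjoint_comp_self V₁).mp h1
  have hs2 : A₂ ∘L V₂ = 1 := (norm_map_iff_adjoint_comp_self V₂).mp h2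
  have s1 : ∀ x : H, A₁ (V₁ x) = x := fun x => by
    rw [← ContinuousLinearMap.comp_apply, hs1, ContinuousLinearMap.one_apply]
  have s2 : ∀ x : H, A₂ (V₂ x) = x := fun x => by
    rw [← ContinuousLinearMap.comp_apply, hs2, ContinuousLinearMap.one_apply]
  have cmV : ∀ x : H, V₂ (V₁ x) = V₁ (V₂ x) := fun x => by
    simpa using (DFunLike.congr_fun hcm x).symm
  have hcmA : A₁ ∘L A₂ = A₂ ∘L A₁ := by
    have h := congrArg ContinuousLinearMap.adjoint hcm
    rw [adjoint_comp, adjoint_comp] at h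
    exact h.symm
  have cmA : ∀ x : H, A₁ (A₂ x) = A₂ (A₁ x) := fun x => by
    simpa using DFunLike.congr_fun hcmA x
  have s21 : ∀ x : H, A₂ (V₁ (V₂ x)) = V₁ x := fun x => by rw [← cmV, s2]
  -- injectivity of V₁, V₂
  have inj1 : ∀ x : H, V₁ x = 0 → x = 0 := fun x hx => by
    have h := h1 x; rw [hx, norm_zero] at h; exact norm_eq_zero.mp h.symm
  have inj2 : ∀ x : H, V₂ x = 0 → x = 0 := fun x hx => by
    have h := h2 x; rw [hx, norm_zero] at h; exact norm_eq_zero.mp h.symm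
  -- operators
  set Q₁ : H →L[ℂ] H := V₁ * A₁ with hQ₁def
  set Q₂ : H →L[ℂ] H := V₂ * A₂ with hQ₂def
  set Q : H →L[ℂ] H := V₁ * V₂ * A₁ * A₂ with hQdef
  set p : H →L[ℂ] H := 1 - Q₁ with hpdef
  set r : H →L[ℂ] H := Q₂ - Q with hrdef
  set c := crossComm V₁ V₂ with hcdef
  set C := defectOp V₁ V₂ with hCdef
  have capp : ∀ x : H, c x = A₂ (V₁ x) - V₁ (A₂ x) := fun x => rfl
  -- C = p - r
  have hC : C = p - r := by
    ext x
    simp only [hCdef, defectOp, ← hA₁def, ← hA₂def, hpdef, hrdef, hQ₁def, hQ₂def, hQdef,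
      ContinuousLinearMap.sub_apply, ContinuousLinearMap.add_apply,
      ContinuousLinearMap.one_apply, ContinuousLinearMap.comp_apply,
      ContinuousLinearMap.mul_apply]
    abel
  -- idempotents
  have hq1 : Q₁ * Q₁ = Q₁ := by
    ext x
    simp only [hQ₁def, ContinuousLinearMap.mul_apply, s1]
  have hq2 : Q₂ * Q₂ = Q₂ := by
    ext x
    simp only [hQ₂def, ContinuousLinearMap.mul_apply, s2]
  have hqq : Q * Q = Q := by
    ext x
    simp only [hQdef, ContinuousLinearMap.mul_apply, s1, s2, s21, cmA]
  have hp2 : p * p = p := by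
    rw [hpdef, sub_mul, mul_sub, mul_sub, one_mul, mul_one, hq1]
    abel
  have hr2 : r * r = r := by
    have hq2q : Q₂ * Q = Q := by
      ext x
      simp only [hQ₂def, hQdef, ContinuousLinearMap.mul_apply, s1, s2, s21, cmV, cmA]
    have hqq2 : Q * Q₂ = Q := by
      ext x
      simp only [hQ₂def, hQdef, ContinuousLinearMap.mul_apply, s1, s2, s21, cmV, cmA]
    rw [hrdef, sub_mul, mul_sub, mul_sub, hq2, hqq, hq2q, hqq2]
    abel
  -- self-adjointness
  have hq1s : adjoint Q₁ = Q₁ := by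
    rw [← star_eq_adjoint, hQ₁def, hA₁def, star_mul, star_eq_adjoint, star_eq_adjoint,
      adjoint_adjoint]
  have hq2s : adjoint Q₂ = Q₂ := by
    rw [← star_eq_adjoint, hQ₂def, hA₂def, star_mul, star_eq_adjoint, star_eq_adjoint,
      adjoint_adjoint]
  have hqs : adjoint Q = Q := by
    rw [← star_eq_adjoint, hQdef, hA₁def, hA₂def]
    simp only [star_mul, star_eq_adjoint, adjoint_adjoint]
    rw [← hA₁def, ← hA₂def]
    ext x
    simp only [ContinuousLinearMap.mul_apply, cmV, cmA]
  have hps : adjoint p = p := by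
    rw [← star_eq_adjoint, hpdef, star_sub, star_one, star_eq_adjoint, hq1s]
  have hrs : adjoint r = r := by
    rw [← star_eq_adjoint, hrdef, star_sub, star_eq_adjoint, star_eq_adjoint, hq2s, hqs]
  have hCs : adjoint C = C := by
    rw [hC, ← star_eq_adjoint, star_sub, star_eq_adjoint, star_eq_adjoint, hps, hrs]
  -- adjoint of the cross-commutator
  have hca : adjoint c = A₁ * V₂ - V₂ * A₁ := by
    rw [hcdef, crossComm, ← hA₂def, ← star_eq_adjoint, star_sub]
    rw [show A₂ ∘L V₁ = A₂ * V₁ from rfl, show V₁ ∘L A₂ = V₁ * A₂ from rfl]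
    rw [star_mul, star_mul, hA₁def, hA₂def]
    simp only [star_eq_adjoint, adjoint_adjoint]
  -- the key operator identity
  have hK : p * r - r * p = V₂ * c * A₁ - V₁ * (adjoint c) * A₂ := by
    rw [hca, hcdef, crossComm, ← hA₂def]
    rw [show A₂ ∘L V₁ = A₂ * V₁ from rfl, show V₁ ∘L A₂ = V₁ * A₂ from rfl]
    ext x
    simp only [hpdef, hrdef, hQ₁def, hQ₂def, hQdef, ContinuousLinearMap.mul_apply,
      ContinuousLinearMap.sub_apply, ContinuousLinearMap.one_apply, map_sub,
      s1, s2, s21, cmV, cmA]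
    abel
  have hTid : C - C^3 = (V₂ * c * A₁ - V₁ * (adjoint c) * A₂) * (p + r - 1) := by
    rw [hC, ← hK]
    exact ring_aux hp2 hr2
  -- finite-dimensionality of range (adjoint c)
  haveI hcafd : FiniteDimensional ℂ (LinearMap.range ((adjoint c : H →L[ℂ] H) : H →ₗ[ℂ] H)) := by
    have hle2 : LinearMap.range ((adjoint c : H →L[ℂ] H) : H →ₗ[ℂ] H) ≤
        (LinearMap.range ((c : H →L[ℂ] H) : H →ₗ[ℂ] H)).map ((adjoint c : H →L[ℂ] H) : H →ₗ[ℂ] H) := by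
      rintro y ⟨x, rfl⟩
      obtain ⟨z, hz, w, hw, rfl⟩ := (LinearMap.range ((c : H →L[ℂ] H) : H →ₗ[ℂ] H)).exists_add_mem_mem_orthogonal x
      have hw0 : adjoint c w = 0 := by
        have h0 : ⟪(adjoint c) w, (adjoint c) w⟫_ℂ = 0 := by
          rw [adjoint_inner_left]
          have hmem : c ((adjoint c) w) ∈ LinearMap.range ((c : H →L[ℂ] H) : H →ₗ[ℂ] H) := LinearMap.mem_range_self _ _
          have h4 := (Submodule.mem_orthogonal _ w).mp hw _ hmem
          rw [← inner_conj_symm, h4, map_zero]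
        exact inner_self_eq_zero.mp h0
      rw [map_add, ContinuousLinearMap.coe_coe, hw0, add_zero]
      exact Submodule.mem_map_of_mem hz
    exact Submodule.finiteDimensional_of_le hle2
  -- finite-dimensionality of range (C - C^3)
  haveI hTfd : FiniteDimensional ℂ (LinearMap.range ((C - C^3 : H →L[ℂ] H) : H →ₗ[ℂ] H)) := by
    have hle3 : LinearMap.range ((C - C^3 : H →L[ℂ] H) : H →ₗ[ℂ] H) ≤
        (LinearMap.range ((c : H →L[ℂ] H) : H →ₗ[ℂ] H)).map ((V₂ : H →L[ℂ] H) : H →ₗ[ℂ] H)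
          ⊔ (LinearMap.range ((adjoint c : H →L[ℂ] H) : H →ₗ[ℂ] H)).map ((V₁ : H →L[ℂ] H) : H →ₗ[ℂ] H) := by
      rintro y ⟨x, rfl⟩
      have happ := DFunLike.congr_fun hTid x
      rw [ContinuousLinearMap.coe_coe, happ]
      simp only [ContinuousLinearMap.mul_apply, ContinuousLinearMap.sub_apply]
      apply Submodule.sub_mem
      · exact Submodule.mem_sup_left
          (Submodule.mem_map_of_mem (LinearMap.mem_range_self _ _))
      · exact Submodule.mem_sup_right
          (Submodule.mem_map_of_mem (LinearMap.mem_range_self _ _))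
    exact Submodule.finiteDimensional_of_le hle3
  -- finite-dimensionality of ker (C + 1)
  haveI hEm1 : FiniteDimensional ℂ (LinearMap.ker ((C + 1 : H →L[ℂ] H) : H →ₗ[ℂ] H)) := by
    have hkey : ∀ x : H, x ∈ LinearMap.ker ((C + 1 : H →L[ℂ] H) : H →ₗ[ℂ] H) →
        c (A₁ x) = A₂ x ∧ V₂ (A₂ x) = x := by
      intro x hx
      have hx' : C x = -x := by
        have h3 := LinearMap.mem_ker.mp hx
        rw [ContinuousLinearMap.coe_coe, ContinuousLinearMap.add_apply, ContinuousLinearMap.one_apply] at h3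
        exact eq_neg_of_add_eq_zero_left h3
      have h6 : p x - r x = -x := by
        rw [← ContinuousLinearMap.sub_apply, ← hC]
        exact hx'
      have h5 : r x = p x + x := by
        have h7 : r x = p x - (p x - r x) := by abel
        rw [h6] at h7
        simpa [sub_neg_eq_add] using h7
      obtain ⟨hpx, hrx⟩ := proj_eigen hr2 hrs hp2 hps h5
      have hq1x : V₁ (A₁ x) = x := by
        have h8 : x - V₁ (A₁ x) = 0 := by
          simpa [hpdef, hQ₁def, ContinuousLinearMap.sub_apply,
            ContinuousLinearMap.one_apply, ContinuousLinearMap.mul_apply] using hpx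
        exact (sub_eq_zero.mp h8).symm
      have h9 : Q₂ x = Q x + x := by
        have h10 : Q₂ x - Q x = x := by
          simpa [hrdef, ContinuousLinearMap.sub_apply] using hrx
        have h11 : Q₂ x = (Q₂ x - Q x) + Q x := by abel
        rw [h10] at h11
        rw [h11]; abel
      obtain ⟨hQx0, hQ2x⟩ := proj_eigen hq2 hq2s hqq hqs h9
      have hQx0' : V₁ (V₂ (A₁ (A₂ x))) = 0 := by
        simpa [hQdef, ContinuousLinearMap.mul_apply] using hQx0
      have hA12 : A₁ (A₂ x) = 0 := inj2 _ (inj1 _ hQx0')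
      have hQ2x' : V₂ (A₂ x) = x := by
        simpa [hQ₂def, ContinuousLinearMap.mul_apply] using hQ2x
      refine ⟨?_, hQ2x'⟩
      rw [capp, hq1x]
      have h12 : A₂ (A₁ x) = 0 := by rw [← cmA, hA12]
      rw [h12, map_zero, sub_zero]
    let φ : (LinearMap.ker ((C + 1 : H →L[ℂ] H) : H →ₗ[ℂ] H) : Submodule ℂ H) →ₗ[ℂ] (LinearMap.range ((c : H →L[ℂ] H) : H →ₗ[ℂ] H) : Submodule ℂ H) :=
      { toFun := fun x => ⟨A₂ x.1, ⟨A₁ x.1, (hkey x.1 x.2).1⟩⟩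
        map_add' := fun a b => Subtype.ext (map_add A₂ a.1 b.1)
        map_smul' := fun m a => Subtype.ext (map_smul A₂ m a.1) }
    have hinj : Function.Injective φ := by
      intro a b hab
      have h8 : A₂ a.1 = A₂ b.1 := congrArg Subtype.val hab
      apply Subtype.ext
      rw [← (hkey a.1 a.2).2, ← (hkey b.1 b.2).2, h8]
    exact FiniteDimensional.of_injective φ hinj
  -- T is self-adjoint
  have hTs : adjoint (C - C^3) = C - C^3 := by
    have hCstar : star C = C := by rw [star_eq_adjoint]; exact hCs
    rw [← star_eq_adjoint, star_sub, star_pow, hCstar]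
  have horth : ∀ w : H, w ∈ (LinearMap.range ((C - C^3 : H →L[ℂ] H) : H →ₗ[ℂ] H))ᗮ → (C - C^3) w = 0 := by
    intro w hw
    have h0 : ⟪(C - C^3) w, (C - C^3) w⟫_ℂ = 0 := by
      nth_rewrite 1 [← hTs]
      rw [adjoint_inner_left]
      have hmem : (C - C^3) ((C - C^3) w) ∈ LinearMap.range ((C - C^3 : H →L[ℂ] H) : H →ₗ[ℂ] H) :=
        LinearMap.mem_range_self _ _
      have h4 := (Submodule.mem_orthogonal _ w).mp hw _ hmem
      rw [← inner_conj_symm, h4, map_zero]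
    exact inner_self_eq_zero.mp h0
  have hcomm : C * (C - C^3) = (C - C^3) * C := by noncomm_ring
  have hSle : LinearMap.range ((C : H →L[ℂ] H) : H →ₗ[ℂ] H) ≤
      (LinearMap.ker ((C - 1 : H →L[ℂ] H) : H →ₗ[ℂ] H) ⊔ LinearMap.ker ((C + 1 : H →L[ℂ] H) : H →ₗ[ℂ] H)) ⊔ LinearMap.range ((C - C^3 : H →L[ℂ] H) : H →ₗ[ℂ] H) := by
    rintro y ⟨x, rfl⟩
    obtain ⟨z, hz, w, hw, rfl⟩ := (LinearMap.range ((C - C^3 : H →L[ℂ] H) : H →ₗ[ℂ] H)).exists_add_mem_mem_orthogonal x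
    rw [map_add]
    apply Submodule.add_mem
    · obtain ⟨v, rfl⟩ := hz
      apply Submodule.mem_sup_right
      have h9 : C ((C - C^3) v) = (C - C^3) (C v) := by
        have h10 := DFunLike.congr_fun hcomm v
        simpa [ContinuousLinearMap.mul_apply] using h10
      simp only [ContinuousLinearMap.coe_coe]
      rw [h9]
      exact LinearMap.mem_range_self _ _
    · have hTw : (C - C^3) w = 0 := horth w hw
      have hw3 : C (C (C w)) = C w := by
        have h10 : C w - (C^3) w = 0 := by
          simpa [ContinuousLinearMap.sub_apply] using hTw
        have h11 : (C^3) w = C (C (C w)) := by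
          simp [pow_succ, pow_zero, one_mul, ContinuousLinearMap.mul_apply]
        rw [h11] at h10
        exact (sub_eq_zero.mp h10).symm
      have hu : ((2⁻¹ : ℂ) • (C w + C (C w))) ∈ LinearMap.ker ((C - 1 : H →L[ℂ] H) : H →ₗ[ℂ] H) := by
        rw [LinearMap.mem_ker]
        simp only [ContinuousLinearMap.coe_coe, ContinuousLinearMap.sub_apply, ContinuousLinearMap.one_apply,
          map_smul, map_add, hw3]
        module
      have hv : ((2⁻¹ : ℂ) • (C (C w) - C w)) ∈ LinearMap.ker ((C + 1 : H →L[ℂ] H) : H →ₗ[ℂ] H) := by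
        rw [LinearMap.mem_ker]
        simp only [ContinuousLinearMap.coe_coe, ContinuousLinearMap.add_apply, ContinuousLinearMap.one_apply,
          map_smul, map_sub, hw3]
        module
      have hdecomp : C w = (2⁻¹ : ℂ) • (C w + C (C w)) - (2⁻¹ : ℂ) • (C (C w) - C w) := by
        module
      rw [ContinuousLinearMap.coe_coe, hdecomp]
      exact Submodule.mem_sup_left
        (Submodule.sub_mem _ (Submodule.mem_sup_left hu) (Submodule.mem_sup_right hv))
  exact Submodule.finiteDimensional_of_le hSle
end

section
/- Let (V1, V2) be a BCL pair on a complex Hilbert space H such that the cross-commutator [V2*, V1] is normal. Then the range of [V2*, V1] equals the range of [V1*, V2], both ranges are contained in E_1 = ker(C(V1, V2) − I), and [V2*, V1] x = 0 and [V1*, V2] x = 0 for every x ∈ H orthogonal to E_1. -/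
open ContinuousLinearMap

local notation "⟪" x ", " y "⟫" => @inner ℂ _ _ x y

/-- For an operator `T` with `‖T x‖ = ‖T* x‖` for all `x` (e.g. normal `T`),
the range of the adjoint is contained in the range of `T`. -/
lemma range_adjoint_le_range {H : Type*} [NormedAddCommGroup H] [InnerProductSpace ℂ H]
    [CompleteSpace H] (T : H →L[ℂ] H) (h : ∀ x, ‖T x‖ = ‖adjoint T x‖) :
    LinearMap.range (adjoint T : H →ₗ[ℂ] H) ≤ LinearMap.range (T : H →ₗ[ℂ] H) := by
  rintro y ⟨x, rfl⟩
  -- the functional `T* u ↦ ⟪x, T u⟫` is well defined and bounded on `range T*`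
  set N : Submodule ℂ H := LinearMap.range (adjoint T : H →ₗ[ℂ] H) with hN
  have hker : ∀ u v : H, adjoint T u = adjoint T v → T u = T v := by
    intro u v huv
    have : ‖T (u - v)‖ = 0 := by rw [h, map_sub, huv, sub_self, norm_zero]
    have := norm_eq_zero.mp this
    rw [map_sub, sub_eq_zero] at this
    exact this
  have hmem : ∀ w : N, adjoint T (Classical.choose w.2) = (w : H) :=
    fun w => Classical.choose_spec w.2
  set f : N → ℂ := fun w => ⟪x, T (Classical.choose w.2)⟫ with hf
  have key : ∀ (w : N) (u : H), adjoint T u = (w : H) → f w = ⟪x, T u⟫ := by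
    intro w u hu
    have := hker _ _ ((hmem w).trans hu.symm)
    simp only [hf, this]
  have fadd : ∀ w₁ w₂ : N, f (w₁ + w₂) = f w₁ + f w₂ := by
    intro w₁ w₂
    rw [key w₁ _ (hmem w₁), key w₂ _ (hmem w₂),
      key (w₁ + w₂) (Classical.choose w₁.2 + Classical.choose w₂.2) (by
        rw [map_add, hmem, hmem]; rfl)]
    rw [map_add, inner_add_right]
  have fsmul : ∀ (c : ℂ) (w : N), f (c • w) = c * f w := by
    intro c w
    rw [key w _ (hmem w), key (c • w) (c • Classical.choose w.2) (by
      rw [map_smul, hmem]; rfl)]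
    rw [map_smul, inner_smul_right]
  set φ₀ : N →ₗ[ℂ] ℂ :=
    { toFun := f, map_add' := fadd, map_smul' := fsmul } with hφ₀
  have hbound : ∀ w : N, ‖φ₀ w‖ ≤ ‖x‖ * ‖w‖ := by
    intro w
    rw [hφ₀]
    simp only [LinearMap.coe_mk, AddHom.coe_mk]
    rw [key w _ (hmem w)]
    calc ‖⟪x, T (Classical.choose w.2)⟫‖ ≤ ‖x‖ * ‖T (Classical.choose w.2)‖ :=
          norm_inner_le_norm _ _
      _ = ‖x‖ * ‖w‖ := by rw [h, hmem]; rfl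
  set φ : N →L[ℂ] ℂ := φ₀.mkContinuous ‖x‖ hbound with hφ
  obtain ⟨g, hg, -⟩ := exists_extension_norm_eq N φ
  set z : H := (InnerProductSpace.toDual ℂ H).symm g with hz
  refine ⟨z, ?_⟩
  refine ext_inner_right ℂ fun u => ?_
  have h1 : ⟪T z, u⟫ = ⟪z, adjoint T u⟫ := (adjoint_inner_right T z u).symm
  have h2 : ⟪z, adjoint T u⟫ = g (adjoint T u) := by
    rw [hz, InnerProductSpace.toDual_symm_apply]
  have h3 : g (adjoint T u) = φ ⟨adjoint T u, ⟨u, rfl⟩⟩ := hg ⟨adjoint T u, ⟨u, rfl⟩⟩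
  have h4 : φ ⟨adjoint T u, ⟨u, rfl⟩⟩ = ⟪x, T u⟫ := key _ u rfl
  have h5 : ⟪x, T u⟫ = ⟪adjoint T x, u⟫ := (adjoint_inner_left T u x).symm
  show ⟪T z, u⟫ = ⟪adjoint T x, u⟫
  rw [h1, h2, h3, h4, h5]

set_option maxHeartbeats 1000000 in
/-- For a BCL pair with normal cross-commutator, the ranges of
`[V₂*, V₁]` and `[V₁*, V₂]` coincide, are contained in `E₁ = ker (C(V₁,V₂) - I)`, and
both cross-commutators vanish on the orthogonal complement of `E₁`. -/
theorem stmt_6 {H : Type*} [NormedAddCommGroup H] [InnerProductSpace ℂ H] [CompleteSpace H]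
    (V₁ V₂ : H →L[ℂ] H)
    (hBCL : IsBCLPair V₁ V₂)
    (hnormal : crossComm V₁ V₂ ∘L adjoint (crossComm V₁ V₂) =
      adjoint (crossComm V₁ V₂) ∘L crossComm V₁ V₂) :
    LinearMap.range (crossComm V₁ V₂ : H →ₗ[ℂ] H) = LinearMap.range (crossComm V₂ V₁ : H →ₗ[ℂ] H) ∧
      LinearMap.range (crossComm V₁ V₂ : H →ₗ[ℂ] H) ≤
        LinearMap.ker ((defectOp V₁ V₂ - 1 : H →L[ℂ] H) : H →ₗ[ℂ] H) ∧
      ∀ x ∈ (LinearMap.ker ((defectOp V₁ V₂ - 1 : H →L[ℂ] H) : H →ₗ[ℂ] H))ᗮ,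
        crossComm V₁ V₂ x = 0 ∧ crossComm V₂ V₁ x = 0 := by
  obtain ⟨⟨h1iso, h2iso, hcomm⟩, -⟩ := hBCL
  set T := crossComm V₁ V₂ with hT
  have hV1 : adjoint V₁ ∘L V₁ = 1 := (norm_map_iff_adjoint_comp_self V₁).mp h1iso
  have hV2 : adjoint V₂ ∘L V₂ = 1 := (norm_map_iff_adjoint_comp_self V₂).mp h2iso
  have hV1p : ∀ y, adjoint V₁ (V₁ y) = y := fun y => by
    rw [← comp_apply, hV1, ContinuousLinearMap.one_apply]
  have hV2p : ∀ y, adjoint V₂ (V₂ y) = y := fun y => by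
    rw [← comp_apply, hV2, ContinuousLinearMap.one_apply]
  have hcp : ∀ y, V₁ (V₂ y) = V₂ (V₁ y) := fun y => by
    rw [← comp_apply, hcomm, comp_apply]
  have hswap : crossComm V₂ V₁ = adjoint T := by
    rw [hT]
    simp only [crossComm, map_sub, adjoint_comp, adjoint_adjoint]
  -- algebraic identities
  have hTV2 : ∀ y, T (V₂ y) = 0 := fun y => by
    simp only [hT, crossComm, sub_apply, comp_apply, hcp y, hV2p (V₁ y), hV2p y, sub_self]
  have hT'V1 : ∀ y, crossComm V₂ V₁ (V₁ y) = 0 := fun y => by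
    simp only [crossComm, sub_apply, comp_apply, ← hcp y, hV1p (V₂ y), hV1p y, sub_self]
  -- normality: pointwise equality of norms
  have hnorm : ∀ x, ‖T x‖ = ‖adjoint T x‖ := by
    intro x
    have h1 : ⟪T x, T x⟫ = ⟪adjoint T x, adjoint T x⟫ := by
      calc ⟪T x, T x⟫ = ⟪x, adjoint T (T x)⟫ := (adjoint_inner_right T x (T x)).symm
        _ = ⟪x, T (adjoint T x)⟫ := by rw [← comp_apply, ← hnormal, comp_apply]
        _ = ⟪adjoint T x, adjoint T x⟫ := (adjoint_inner_left T (adjoint T x) x).symm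
    have h2 : ‖T x‖ ^ 2 = ‖adjoint T x‖ ^ 2 := by
      have := congrArg (RCLike.re (K := ℂ)) h1
      simpa only [inner_self_eq_norm_sq] using this
    rw [← Real.sqrt_sq (norm_nonneg (T x)), ← Real.sqrt_sq (norm_nonneg (adjoint T x)), h2]
  have hT'V2 : ∀ y, adjoint T (V₂ y) = 0 := fun y =>
    norm_eq_zero.mp (by rw [← hnorm, hTV2, norm_zero])
  have hTV1 : ∀ y, T (V₁ y) = 0 := fun y =>
    norm_eq_zero.mp (by rw [hnorm, ← hswap, hT'V1, norm_zero])
  -- the adjoints of V₁, V₂ kill the ranges of T and T†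
  have hA1 : ∀ x, adjoint V₁ (T x) = 0 := by
    intro x
    rw [← inner_self_eq_zero (𝕜 := ℂ)]
    calc ⟪adjoint V₁ (T x), adjoint V₁ (T x)⟫
        = ⟪T x, V₁ (adjoint V₁ (T x))⟫ := adjoint_inner_left V₁ _ (T x)
      _ = ⟪x, adjoint T (V₁ (adjoint V₁ (T x)))⟫ :=
          (adjoint_inner_right T x _).symm
      _ = 0 := by rw [← hswap, hT'V1, inner_zero_right]
  have hA2 : ∀ x, adjoint V₂ (T x) = 0 := by
    intro x
    rw [← inner_self_eq_zero (𝕜 := ℂ)]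
    calc ⟪adjoint V₂ (T x), adjoint V₂ (T x)⟫
        = ⟪T x, V₂ (adjoint V₂ (T x))⟫ := adjoint_inner_left V₂ _ (T x)
      _ = ⟪x, adjoint T (V₂ (adjoint V₂ (T x)))⟫ :=
          (adjoint_inner_right T x _).symm
      _ = 0 := by rw [hT'V2, inner_zero_right]
  have hB1 : ∀ x, adjoint V₁ (adjoint T x) = 0 := by
    intro x
    rw [← inner_self_eq_zero (𝕜 := ℂ)]
    calc ⟪adjoint V₁ (adjoint T x), adjoint V₁ (adjoint T x)⟫
        = ⟪adjoint T x, V₁ (adjoint V₁ (adjoint T x))⟫ :=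
          adjoint_inner_left V₁ _ (adjoint T x)
      _ = ⟪x, T (V₁ (adjoint V₁ (adjoint T x)))⟫ := adjoint_inner_left T _ x
      _ = 0 := by rw [hTV1, inner_zero_right]
  have hB2 : ∀ x, adjoint V₂ (adjoint T x) = 0 := by
    intro x
    rw [← inner_self_eq_zero (𝕜 := ℂ)]
    calc ⟪adjoint V₂ (adjoint T x), adjoint V₂ (adjoint T x)⟫
        = ⟪adjoint T x, V₂ (adjoint V₂ (adjoint T x))⟫ :=
          adjoint_inner_left V₂ _ (adjoint T x)
      _ = ⟪x, T (V₂ (adjoint V₂ (adjoint T x)))⟫ := adjoint_inner_left T _ x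
      _ = 0 := by rw [hTV2, inner_zero_right]
  -- membership in E₁
  have hE : ∀ y : H, adjoint V₁ y = 0 → adjoint V₂ y = 0 →
      y ∈ LinearMap.ker ((defectOp V₁ V₂ - 1 : H →L[ℂ] H) : H →ₗ[ℂ] H) := by
    intro y hy1 hy2
    rw [LinearMap.mem_ker]
    show (defectOp V₁ V₂ - 1) y = 0
    simp only [defectOp, sub_apply, add_apply, one_apply, comp_apply, hy1, hy2, map_zero]
    abel
  have part2 : LinearMap.range (T : H →ₗ[ℂ] H) ≤ LinearMap.ker ((defectOp V₁ V₂ - 1 : H →L[ℂ] H) : H →ₗ[ℂ] H) := by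
    rintro y ⟨x, rfl⟩
    exact hE _ (hA1 x) (hA2 x)
  have part2' : LinearMap.range (adjoint T : H →ₗ[ℂ] H) ≤ LinearMap.ker ((defectOp V₁ V₂ - 1 : H →L[ℂ] H) : H →ₗ[ℂ] H) := by
    rintro y ⟨x, rfl⟩
    exact hE _ (hB1 x) (hB2 x)
  refine ⟨?_, part2, ?_⟩
  · rw [hswap]
    refine le_antisymm ?_ (range_adjoint_le_range T hnorm)
    have := range_adjoint_le_range (adjoint T) (fun x => by
      rw [adjoint_adjoint]; exact (hnorm x).symm)
    rwa [adjoint_adjoint] at this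
  · intro x hx
    have horth : ∀ u ∈ LinearMap.ker ((defectOp V₁ V₂ - 1 : H →L[ℂ] H) : H →ₗ[ℂ] H), ⟪x, u⟫ = 0 := by
      intro u hu
      exact inner_eq_zero_symm.mpr ((Submodule.mem_orthogonal _ x).mp hx u hu)
    constructor
    · refine ext_inner_right ℂ fun v => ?_
      rw [inner_zero_left]
      calc ⟪T x, v⟫ = ⟪x, adjoint T v⟫ := (adjoint_inner_right T x v).symm
        _ = 0 := horth _ (part2' ⟨v, rfl⟩)
    · rw [hswap]
      refine ext_inner_right ℂ fun v => ?_
      rw [inner_zero_left]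
      calc ⟪adjoint T x, v⟫ = ⟪x, T v⟫ := adjoint_inner_left T v x
        _ = 0 := horth _ (part2 ⟨v, rfl⟩)
end

section
/- Let (V1, V2) be an irreducible 3-finite pair on a complex Hilbert space H. Then the cross-commutator [V2*, V1] has rank 1, and its range equals E_1 = ker(C(V1, V2) − I). -/
open ContinuousLinearMap

section Stmt8Aux
set_option linter.unusedSectionVars false
set_option maxHeartbeats 1000000

open ContinuousLinearMap

variable {H : Type*} [NormedAddCommGroup H] [InnerProductSpace ℂ H] [CompleteSpace H]

local notation "⟪" x ", " y "⟫" => @inner ℂ _ _ x y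

structure GoodPair (V₁ V₂ : H →L[ℂ] H) : Prop where
  comm : V₁ * V₂ = V₂ * V₁
  iso₁ : adjoint V₁ * V₁ = 1
  iso₂ : adjoint V₂ * V₂ = 1
  normal : crossComm V₁ V₂ * adjoint (crossComm V₁ V₂)
      = adjoint (crossComm V₁ V₂) * crossComm V₁ V₂

namespace GoodPair

lemma pT (V₁ V₂ : H →L[ℂ] H) (z : H) :
    crossComm V₁ V₂ z = adjoint V₂ (V₁ z) - V₁ (adjoint V₂ z) := by
  simp [crossComm]

lemma adjT (V₁ V₂ : H →L[ℂ] H) :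
    adjoint (crossComm V₁ V₂) = adjoint V₁ ∘L V₂ - V₂ ∘L adjoint V₁ := by
  rw [crossComm, map_sub, adjoint_comp, adjoint_comp, adjoint_adjoint]

lemma pT' (V₁ V₂ : H →L[ℂ] H) (z : H) :
    adjoint (crossComm V₁ V₂) z = adjoint V₁ (V₂ z) - V₂ (adjoint V₁ z) := by
  rw [adjT]; simp

lemma pC (V₁ V₂ : H →L[ℂ] H) (z : H) :
    defectOp V₁ V₂ z = z - V₁ (adjoint V₁ z) - V₂ (adjoint V₂ z)
      + V₁ (V₂ (adjoint V₁ (adjoint V₂ z))) := by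
  simp [defectOp]

variable {V₁ V₂ : H →L[ℂ] H} (hp : GoodPair V₁ V₂)
include hp

lemma pa₁ (z : H) : adjoint V₁ (V₁ z) = z := by
  have := DFunLike.congr_fun hp.iso₁ z
  simpa [ContinuousLinearMap.mul_apply] using this

lemma pa₂ (z : H) : adjoint V₂ (V₂ z) = z := by
  have := DFunLike.congr_fun hp.iso₂ z
  simpa [ContinuousLinearMap.mul_apply] using this

lemma pc (z : H) : V₁ (V₂ z) = V₂ (V₁ z) := by
  have := DFunLike.congr_fun hp.comm z
  simpa [ContinuousLinearMap.mul_apply] using this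

lemma adj_comm : adjoint V₁ * adjoint V₂ = adjoint V₂ * adjoint V₁ := by
  have h := congrArg ContinuousLinearMap.adjoint hp.comm
  rw [ContinuousLinearMap.mul_def, ContinuousLinearMap.mul_def, adjoint_comp, adjoint_comp] at h
  rw [ContinuousLinearMap.mul_def, ContinuousLinearMap.mul_def]
  exact h.symm

lemma pbc (z : H) : adjoint V₁ (adjoint V₂ z) = adjoint V₂ (adjoint V₁ z) := by
  have := DFunLike.congr_fun hp.adj_comm z
  simpa [ContinuousLinearMap.mul_apply] using this

lemma pnorm₁ (z : H) : ‖V₁ z‖ = ‖z‖ := by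
  have h1 : ‖V₁ z‖ ^ 2 = ‖z‖ ^ 2 := by
    rw [← @inner_self_eq_norm_sq ℂ, ← @inner_self_eq_norm_sq ℂ]
    rw [← adjoint_inner_left, hp.pa₁]
  nlinarith [norm_nonneg (V₁ z), norm_nonneg z]

lemma pnorm₂ (z : H) : ‖V₂ z‖ = ‖z‖ := by
  have h1 : ‖V₂ z‖ ^ 2 = ‖z‖ ^ 2 := by
    rw [← @inner_self_eq_norm_sq ℂ, ← @inner_self_eq_norm_sq ℂ]
    rw [← adjoint_inner_left, hp.pa₂]
  nlinarith [norm_nonneg (V₂ z), norm_nonneg z]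

/-- `V₁* T = 0` -/
lemma pb₁T (z : H) : adjoint V₁ (crossComm V₁ V₂ z) = 0 := by
  rw [pT, map_sub, hp.pbc, hp.pa₁, hp.pa₁, sub_self]

/-- `T V₂ = 0` -/
lemma pTa₂ (z : H) : crossComm V₁ V₂ (V₂ z) = 0 := by
  rw [pT, hp.pa₂, hp.pc, hp.pa₂, sub_self]

/-- `V₂* T* = 0` -/
lemma pb₂T' (z : H) : adjoint V₂ (adjoint (crossComm V₁ V₂) z) = 0 := by
  rw [pT', map_sub, ← hp.pbc, hp.pa₂, hp.pa₂, sub_self]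

/-- `T* V₁ = 0` -/
lemma pT'a₁ (z : H) : adjoint (crossComm V₁ V₂) (V₁ z) = 0 := by
  rw [pT', hp.pa₁, ← hp.pc, hp.pa₁, sub_self]

/-- normality pointwise -/
lemma pnormT (z : H) : ‖crossComm V₁ V₂ z‖ = ‖adjoint (crossComm V₁ V₂) z‖ := by
  set T := crossComm V₁ V₂
  have h1 : ‖T z‖ ^ 2 = ‖adjoint T z‖ ^ 2 := by
    rw [← @inner_self_eq_norm_sq ℂ, ← @inner_self_eq_norm_sq ℂ]
    rw [← adjoint_inner_left, ← adjoint_inner_left, adjoint_adjoint]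
    have := DFunLike.congr_fun hp.normal z
    simp only [ContinuousLinearMap.mul_apply] at this
    rw [← this]
  nlinarith [norm_nonneg (T z), norm_nonneg (adjoint T z)]

/-- `T V₁ = 0` -/
lemma pTa₁ (z : H) : crossComm V₁ V₂ (V₁ z) = 0 := by
  have h := hp.pnormT (V₁ z)
  rw [hp.pT'a₁, norm_zero] at h
  exact norm_eq_zero.mp h

/-- `T* V₂ = 0` -/
lemma pT'a₂ (z : H) : adjoint (crossComm V₁ V₂) (V₂ z) = 0 := by
  have h := (hp.pnormT (V₂ z)).symm
  rw [hp.pTa₂, norm_zero] at h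
  exact norm_eq_zero.mp h

/-- `V₂* T = 0` -/
lemma pb₂T (z : H) : adjoint V₂ (crossComm V₁ V₂ z) = 0 := by
  apply ext_inner_right ℂ (y := (0 : H))
  intro v
  rw [adjoint_inner_left, ← adjoint_adjoint (crossComm V₁ V₂), adjoint_inner_left, hp.pT'a₂]
  simp

/-- `V₁* T* = 0` -/
lemma pb₁T' (z : H) : adjoint V₁ (adjoint (crossComm V₁ V₂) z) = 0 := by
  apply ext_inner_right ℂ (y := (0 : H))
  intro v
  rw [adjoint_inner_left, adjoint_inner_left, hp.pTa₁]
  simp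

lemma pr1 (z : H) : adjoint V₂ (adjoint V₁ (V₂ z)) = adjoint V₁ z := by
  have h : adjoint V₁ (V₂ z) = adjoint (crossComm V₁ V₂) z + V₂ (adjoint V₁ z) := by
    rw [GoodPair.pT']; abel
  rw [h, map_add, hp.pb₂T', hp.pa₂, zero_add]

lemma pr2 (z : H) : adjoint V₁ (V₂ (V₁ z)) = V₂ z := by
  have h : adjoint V₁ (V₂ (V₁ z)) = adjoint (crossComm V₁ V₂) (V₁ z)
      + V₂ (adjoint V₁ (V₁ z)) := by
    rw [GoodPair.pT']; abel
  rw [h, hp.pT'a₁, zero_add, hp.pa₁]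

lemma pr3 (z : H) : adjoint V₂ (V₁ (V₂ z)) = V₁ z := by
  have h := GoodPair.pT V₁ V₂ (V₂ z)
  rw [hp.pTa₂, hp.pa₂] at h
  exact eq_of_sub_eq_zero h.symm

end GoodPair

section NormFacts

variable {V₁ V₂ : H →L[ℂ] H}

lemma contr (hiso : ∀ z : H, ‖V₁ z‖ = ‖z‖) (w : H) : ‖adjoint V₁ w‖ ≤ ‖w‖ := by
  have h2 : ‖adjoint V₁ w‖ ^ 2 ≤ ‖w‖ * ‖adjoint V₁ w‖ := by
    have h3 : (‖adjoint V₁ w‖ : ℝ) ^ 2 = RCLike.re (K := ℂ) ⟪adjoint V₁ w, adjoint V₁ w⟫ := by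
      rw [@inner_self_eq_norm_sq ℂ]
    rw [h3, adjoint_inner_left]
    calc RCLike.re (K := ℂ) ⟪w, V₁ (adjoint V₁ w)⟫ ≤ ‖w‖ * ‖V₁ (adjoint V₁ w)‖ :=
          re_inner_le_norm _ _
      _ = ‖w‖ * ‖adjoint V₁ w‖ := by rw [hiso]
  nlinarith [norm_nonneg (adjoint V₁ w), norm_nonneg w]

lemma pproj (hiso : ∀ z : H, ‖V₁ z‖ = ‖z‖) (z : H) (h : ‖adjoint V₁ z‖ = ‖z‖) :
    V₁ (adjoint V₁ z) = z := by
  have hre : RCLike.re (K := ℂ) ⟪z, V₁ (adjoint V₁ z)⟫ = ‖z‖ ^ 2 := by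
    rw [← adjoint_inner_left, @inner_self_eq_norm_sq ℂ, h]
  have hnn : ‖V₁ (adjoint V₁ z)‖ = ‖z‖ := by rw [hiso, h]
  have h0 : ‖z - V₁ (adjoint V₁ z)‖ ^ 2 = 0 := by
    rw [@norm_sub_sq ℂ, hre, hnn]; ring
  have := pow_eq_zero_iff (n := 2) (by norm_num) |>.mp h0
  rw [norm_eq_zero, sub_eq_zero] at this
  exact this.symm

lemma vec_rearrange {A B D z : H} (h : z - A - B + D = z) : A + B = D := by
  have h2 : (z - A - B + D) - (z - A - B) = z - (z - A - B) := by rw [h]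
  simp only [add_sub_cancel_left] at h2
  rw [h2]; abel

lemma vec_rearrange2 {A B D z : H} (h : z - A - B + D = -z) : A + B - D = z + z := by
  have h2 : (z - A - B + D) - (z - A - B) = -z - (z - A - B) := by rw [h]
  simp only [add_sub_cancel_left] at h2
  rw [sub_eq_iff_eq_add, h2]; abel

lemma reAA (A : H →L[ℂ] H) (z : H) :
    RCLike.re (K := ℂ) ⟪A (adjoint A z), z⟫ = ‖adjoint A z‖ ^ 2 := by
  rw [(adjoint_inner_right A (adjoint A z) z).symm, @inner_self_eq_norm_sq ℂ]

lemma reDD (hbc : ∀ z : H, adjoint V₁ (adjoint V₂ z) = adjoint V₂ (adjoint V₁ z)) (z : H) :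
    RCLike.re (K := ℂ) ⟪V₁ (V₂ (adjoint V₁ (adjoint V₂ z))), z⟫
      = ‖adjoint V₁ (adjoint V₂ z)‖ ^ 2 := by
  rw [(adjoint_inner_right V₁ _ z).symm, (adjoint_inner_right V₂ _ (adjoint V₁ z)).symm,
    ← hbc, @inner_self_eq_norm_sq ℂ]

lemma ker_char (hbc : ∀ z : H, adjoint V₁ (adjoint V₂ z) = adjoint V₂ (adjoint V₁ z))
    (hiso₁ : ∀ z : H, ‖V₁ z‖ = ‖z‖) (z : H) :
    defectOp V₁ V₂ z = z ↔ adjoint V₁ z = 0 ∧ adjoint V₂ z = 0 := by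
  constructor
  · intro h
    rw [GoodPair.pC] at h
    have hAB := vec_rearrange h
    have h0 := congrArg (fun w => RCLike.re (K := ℂ) ⟪w, z⟫) hAB
    simp only [inner_add_left, map_add] at h0
    rw [reAA V₁ z, reAA V₂ z, reDD hbc z] at h0
    have hcon : ‖adjoint V₁ (adjoint V₂ z)‖ ^ 2 ≤ ‖adjoint V₂ z‖ ^ 2 :=
      pow_le_pow_left₀ (norm_nonneg _) (contr hiso₁ (adjoint V₂ z)) 2
    have hb1 : adjoint V₁ z = 0 := by
      have h5 : ‖adjoint V₁ z‖ ^ 2 = 0 := by nlinarith [norm_nonneg (adjoint V₁ z)]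
      have := pow_eq_zero_iff (n := 2) (by norm_num) |>.mp h5
      rwa [norm_eq_zero] at this
    refine ⟨hb1, ?_⟩
    have hbb : adjoint V₁ (adjoint V₂ z) = 0 := by rw [hbc, hb1, map_zero]
    have h6 : ‖adjoint V₂ z‖ ^ 2 = 0 := by
      rw [hb1, hbb] at h0
      simpa using h0
    have := pow_eq_zero_iff (n := 2) (by norm_num) |>.mp h6
    rwa [norm_eq_zero] at this
  · rintro ⟨h1, h2⟩
    rw [GoodPair.pC, h1, h2]
    simp

lemma neg_char (hbc : ∀ z : H, adjoint V₁ (adjoint V₂ z) = adjoint V₂ (adjoint V₁ z))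
    (hiso₁ : ∀ z : H, ‖V₁ z‖ = ‖z‖) (hiso₂ : ∀ z : H, ‖V₂ z‖ = ‖z‖) (z : H) :
    defectOp V₁ V₂ z = -z ↔
      (V₁ (adjoint V₁ z) = z ∧ V₂ (adjoint V₂ z) = z ∧ adjoint V₁ (adjoint V₂ z) = 0) := by
  constructor
  · intro h
    rw [GoodPair.pC] at h
    have hAB := vec_rearrange2 h
    have h0 := congrArg (fun w => RCLike.re (K := ℂ) ⟪w, z⟫) hAB
    simp only [inner_add_left, inner_sub_left, map_add, map_sub] at h0
    rw [reAA V₁ z, reAA V₂ z, reDD hbc z, @inner_self_eq_norm_sq ℂ] at h0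
    have hc1 : ‖adjoint V₁ z‖ ^ 2 ≤ ‖z‖ ^ 2 :=
      pow_le_pow_left₀ (norm_nonneg _) (contr hiso₁ z) 2
    have hc2 : ‖adjoint V₂ z‖ ^ 2 ≤ ‖z‖ ^ 2 :=
      pow_le_pow_left₀ (norm_nonneg _) (contr hiso₂ z) 2
    have hbbn : ‖adjoint V₁ (adjoint V₂ z)‖ ^ 2 = 0 := by
      nlinarith [norm_nonneg (adjoint V₁ (adjoint V₂ z))]
    have hbb : adjoint V₁ (adjoint V₂ z) = 0 := by
      have := pow_eq_zero_iff (n := 2) (by norm_num) |>.mp hbbn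
      rwa [norm_eq_zero] at this
    have he1 : ‖adjoint V₁ z‖ = ‖z‖ := by
      nlinarith [norm_nonneg (adjoint V₁ z), norm_nonneg z, norm_nonneg (adjoint V₂ z)]
    have he2 : ‖adjoint V₂ z‖ = ‖z‖ := by
      nlinarith [norm_nonneg (adjoint V₂ z), norm_nonneg z, norm_nonneg (adjoint V₁ z)]
    exact ⟨pproj hiso₁ z he1, pproj hiso₂ z he2, hbb⟩
  · rintro ⟨h1, h2, h3⟩
    rw [GoodPair.pC, h1, h2, h3]
    simp

end NormFacts

section Engine
variable {V₁ V₂ : H →L[ℂ] H}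

lemma span_stable_closure (A : H →L[ℂ] H) (s : Set H)
    (h : ∀ x ∈ s, A x ∈ Submodule.span ℂ s) :
    ∀ x ∈ (Submodule.span ℂ s).topologicalClosure,
      A x ∈ (Submodule.span ℂ s).topologicalClosure := by
  have hspan : ∀ x ∈ Submodule.span ℂ s, A x ∈ Submodule.span ℂ s := by
    intro x hx
    induction hx using Submodule.span_induction with
    | mem x hx => exact h x hx
    | zero => simp
    | add x y _ _ hx hy => rw [map_add]; exact Submodule.add_mem _ hx hy
    | smul c x _ hx => rw [map_smul]; exact Submodule.smul_mem _ c hx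
  intro x hx
  have hx' : x ∈ closure (Submodule.span ℂ s : Set H) := hx
  have hmem : A x ∈ closure (A '' (Submodule.span ℂ s : Set H)) :=
    map_mem_closure A.continuous hx' (fun y hy => Set.mem_image_of_mem _ hy)
  have himg : (A '' (Submodule.span ℂ s : Set H)) ⊆ (Submodule.span ℂ s : Set H) := by
    rintro _ ⟨y, hy, rfl⟩; exact hspan y hy
  exact closure_mono himg hmem

lemma engine (hirr : IsIrreduciblePair V₁ V₂) (s : Set H)
    (h1 : ∀ x ∈ s, V₁ x ∈ Submodule.span ℂ s)
    (h2 : ∀ x ∈ s, V₂ x ∈ Submodule.span ℂ s)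
    (h3 : ∀ x ∈ s, adjoint V₁ x ∈ Submodule.span ℂ s)
    (h4 : ∀ x ∈ s, adjoint V₂ x ∈ Submodule.span ℂ s)
    (x₀ : H) (hx₀s : x₀ ∈ s) (hx₀ : x₀ ≠ 0) :
    ∀ y : H, y ∈ closure (Submodule.span ℂ s : Set H) := by
  set SP := (Submodule.span ℂ s).topologicalClosure with hSP
  have hred : ReducesPair V₁ V₂ SP :=
    ⟨span_stable_closure V₁ s h1, span_stable_closure V₂ s h2,
     span_stable_closure (adjoint V₁) s h3, span_stable_closure (adjoint V₂) s h4⟩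
  rcases hirr SP (Submodule.isClosed_topologicalClosure _) hred with hbot | htop
  · exfalso
    apply hx₀
    have : x₀ ∈ SP := by
      apply Submodule.le_topologicalClosure
      exact Submodule.subset_span hx₀s
    rw [hbot] at this
    simpa using this
  · intro y
    have : y ∈ SP := by rw [htop]; trivial
    exact this

lemma trap (s t : Set H) (ht : t.Finite) (C : H →L[ℂ] H)
    (hmaps : ∀ x ∈ s, C x ∈ Submodule.span ℂ t)
    (hdense : ∀ y : H, y ∈ closure (Submodule.span ℂ s : Set H)) :
    LinearMap.range (C : H →ₗ[ℂ] H) ≤ Submodule.span ℂ t := by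
  haveI : FiniteDimensional ℂ (Submodule.span ℂ t) := FiniteDimensional.span_of_finite ℂ ht
  have hclosed : IsClosed (Submodule.span ℂ t : Set H) :=
    Submodule.closed_of_finiteDimensional _
  rintro _ ⟨y, rfl⟩
  have hy := hdense y
  have hspan : ∀ x ∈ Submodule.span ℂ s, C x ∈ Submodule.span ℂ t := by
    intro x hx
    induction hx using Submodule.span_induction with
    | mem x hx => exact hmaps x hx
    | zero => simp
    | add x y _ _ hx hy => rw [map_add]; exact Submodule.add_mem _ hx hy
    | smul c x _ hx => rw [map_smul]; exact Submodule.smul_mem _ c hx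
  have hmem : C y ∈ closure (C '' (Submodule.span ℂ s : Set H)) :=
    map_mem_closure C.continuous hy (fun z hz => Set.mem_image_of_mem _ hz)
  have himg : (C '' (Submodule.span ℂ s : Set H)) ⊆ (Submodule.span ℂ t : Set H) := by
    rintro _ ⟨z, hz, rfl⟩; exact hspan z hz
  have := closure_mono himg hmem
  rwa [hclosed.closure_eq] at this

lemma rank_le_two_of_range_le (C : H →L[ℂ] H) (u n : H)
    (h : LinearMap.range (C : H →ₗ[ℂ] H) ≤ Submodule.span ℂ {u, n}) :
    Module.rank ℂ (LinearMap.range (C : H →ₗ[ℂ] H)) ≤ 2 := by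
  calc Module.rank ℂ (LinearMap.range (C : H →ₗ[ℂ] H)) ≤ Module.rank ℂ (Submodule.span ℂ ({u, n} : Set H)) :=
        Submodule.rank_mono h
    _ ≤ Cardinal.mk ({u, n} : Set H) := rank_span_le _
    _ ≤ 2 := by
        calc Cardinal.mk ({u, n} : Set H) ≤ Cardinal.mk ({n} : Set H) + 1 := Cardinal.mk_insert_le
          _ = 2 := by rw [Cardinal.mk_singleton]; norm_num

lemma rank_le_one_of_range_le (C : H →L[ℂ] H) (u : H)
    (h : LinearMap.range (C : H →ₗ[ℂ] H) ≤ Submodule.span ℂ {u}) :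
    Module.rank ℂ (LinearMap.range (C : H →ₗ[ℂ] H)) ≤ 1 := by
  calc Module.rank ℂ (LinearMap.range (C : H →ₗ[ℂ] H)) ≤ Module.rank ℂ (Submodule.span ℂ ({u} : Set H)) :=
        Submodule.rank_mono h
    _ ≤ Cardinal.mk ({u} : Set H) := rank_span_le _
    _ ≤ 1 := by rw [Cardinal.mk_singleton]

end Engine


section CLemmas
variable {V₁ V₂ : H →L[ℂ] H} (hp : GoodPair V₁ V₂)
include hp

/-- `C (V₁ V₂ z) = 0` -/
lemma pCV (z : H) : defectOp V₁ V₂ (V₁ (V₂ z)) = 0 := by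
  have hb2 : adjoint V₂ (V₁ (V₂ z)) = V₁ z := by
    have h := GoodPair.pT V₁ V₂ (V₂ z)
    rw [hp.pTa₂, hp.pa₂] at h
    exact eq_of_sub_eq_zero h.symm
  rw [GoodPair.pC, hp.pa₁, hb2, hp.pa₁, hp.pc]
  abel

/-- `C (V₂ z) = - V₁ (T* z)` -/
lemma pCa₂ (z : H) : defectOp V₁ V₂ (V₂ z) = -(V₁ (adjoint (crossComm V₁ V₂) z)) := by
  rw [GoodPair.pC, hp.pa₂, GoodPair.pT', map_sub]
  abel

/-- `C (V₁ z) = - V₂ (T z)` -/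
lemma pCa₁ (z : H) : defectOp V₁ V₂ (V₁ z) = -(V₂ (crossComm V₁ V₂ z)) := by
  have hb2 : adjoint V₂ (V₁ z) = crossComm V₁ V₂ z + V₁ (adjoint V₂ z) := by
    rw [GoodPair.pT]; abel
  rw [GoodPair.pC, hb2]
  simp only [map_add, hp.pb₁T, hp.pa₁, hp.pc, zero_add]
  abel

end CLemmas


section KeyVanish
variable {V₁ V₂ : H →L[ℂ] H}

lemma key_vanish (hp : GoodPair V₁ V₂) (hirr : IsIrreduciblePair V₁ V₂)
    (hrank : Module.rank ℂ (LinearMap.range (defectOp V₁ V₂ : H →ₗ[ℂ] H)) = 3)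
    (x₀ : H) (hb1 : adjoint V₁ x₀ = 0) (hb2 : adjoint V₂ x₀ = 0)
    (hTs : adjoint (crossComm V₁ V₂) x₀ = 0) : x₀ = 0 := by
  by_contra hx₀
  have hT0 : crossComm V₁ V₂ x₀ = 0 := by
    have h := hp.pnormT x₀; rw [hTs, norm_zero] at h; exact norm_eq_zero.mp h
  set W : H →L[ℂ] H := V₁ * V₂ with hW
  have hWz : ∀ z : H, W z = V₁ (V₂ z) := fun z => rfl
  have hWsucc : ∀ (k : ℕ) (z : H), (W ^ (k+1)) z = (W ^ k) (W z) := by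
    intro k z; rw [pow_succ]; rfl
  -- x-sequence facts
  have hxsucc : ∀ (n : ℕ), (V₂ ^ (n+1)) x₀ = V₂ ((V₂ ^ n) x₀) := by
    intro n; rw [pow_succ']; rfl
  have hysucc : ∀ (n : ℕ), (V₁ ^ (n+1)) x₀ = V₁ ((V₁ ^ n) x₀) := by
    intro n; rw [pow_succ']; rfl
  have hxT' : ∀ n : ℕ, adjoint (crossComm V₁ V₂) ((V₂ ^ n) x₀) = 0 := by
    intro n
    cases n with
    | zero => simpa using hTs
    | succ n => rw [hxsucc]; exact hp.pT'a₂ _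
  have hxT : ∀ n : ℕ, crossComm V₁ V₂ ((V₂ ^ n) x₀) = 0 := by
    intro n
    have h := hp.pnormT ((V₂ ^ n) x₀); rw [hxT' n, norm_zero] at h
    exact norm_eq_zero.mp h
  have hxb1 : ∀ n : ℕ, adjoint V₁ ((V₂ ^ n) x₀) = 0 := by
    intro n
    induction n with
    | zero => simpa using hb1
    | succ n ih =>
      rw [hxsucc]
      have h := GoodPair.pT' V₁ V₂ ((V₂ ^ n) x₀)
      rw [hxT' n] at h
      have h2 := (eq_of_sub_eq_zero h.symm)
      rw [h2, ih, map_zero]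
  have hxb2 : ∀ n : ℕ, adjoint V₂ ((V₂ ^ (n+1)) x₀) = (V₂ ^ n) x₀ := by
    intro n; rw [hxsucc]; exact hp.pa₂ _
  have hyT : ∀ n : ℕ, crossComm V₁ V₂ ((V₁ ^ (n+1)) x₀) = 0 := by
    intro n; rw [hysucc]; exact hp.pTa₁ _
  have hyT0 : ∀ n : ℕ, crossComm V₁ V₂ ((V₁ ^ n) x₀) = 0 := by
    intro n
    cases n with
    | zero => simpa using hT0
    | succ n => exact hyT n
  have hyb2 : ∀ n : ℕ, adjoint V₂ ((V₁ ^ (n+1)) x₀) = 0 := by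
    intro n
    induction n with
    | zero =>
      have h := GoodPair.pT V₁ V₂ x₀
      rw [hT0, hb2, map_zero] at h
      have h2 := (eq_of_sub_eq_zero h.symm)
      simpa using h2
    | succ n ih =>
      rw [hysucc]
      have h := GoodPair.pT V₁ V₂ ((V₁ ^ (n+1)) x₀)
      rw [hyT n] at h
      have h2 := (eq_of_sub_eq_zero h.symm)
      rw [h2, ih, map_zero]
  have hyb1 : ∀ n : ℕ, adjoint V₁ ((V₁ ^ (n+1)) x₀) = (V₁ ^ n) x₀ := by
    intro n; rw [hysucc]; exact hp.pa₁ _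
  -- commutation of W-powers
  have hcomm₁ : Commute V₁ W := by
    unfold W
    rw [Commute, SemiconjBy, mul_assoc, hp.comm, ← mul_assoc]
  have hcomm₂ : Commute V₂ W := by
    unfold W
    rw [Commute, SemiconjBy, ← mul_assoc, ← hp.comm, mul_assoc]
  have hcW₁ : ∀ (k : ℕ) (z : H), V₁ ((W ^ k) z) = (W ^ k) (V₁ z) := by
    intro k z
    have := DFunLike.congr_fun ((hcomm₁.pow_right k) : V₁ * W ^ k = W ^ k * V₁) z
    simpa [ContinuousLinearMap.mul_apply] using this
  have hcW₂ : ∀ (k : ℕ) (z : H), V₂ ((W ^ k) z) = (W ^ k) (V₂ z) := by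
    intro k z
    have := DFunLike.congr_fun ((hcomm₂.pow_right k) : V₂ * W ^ k = W ^ k * V₂) z
    simpa [ContinuousLinearMap.mul_apply] using this
  have hb₁W : ∀ z : H, adjoint V₁ (W z) = V₂ z := by
    intro z; rw [hWz]; exact hp.pa₁ _
  have hb₂W : ∀ z : H, adjoint V₂ (W z) = V₁ z := by
    intro z
    rw [hWz]
    have h := GoodPair.pT V₁ V₂ (V₂ z)
    rw [hp.pTa₂, hp.pa₂] at h
    exact eq_of_sub_eq_zero h.symm
  -- the generating set
  set s : Set H := {h : H | (∃ k n : ℕ, h = (W ^ k) ((V₂ ^ n) x₀)) ∨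
      (∃ k n : ℕ, h = (W ^ k) ((V₁ ^ (n+1)) x₀))} with hs
  have hmemx : ∀ k n : ℕ, (W ^ k) ((V₂ ^ n) x₀) ∈ s := fun k n => Or.inl ⟨k, n, rfl⟩
  have hmemy : ∀ k n : ℕ, (W ^ k) ((V₁ ^ (n+1)) x₀) ∈ s := fun k n => Or.inr ⟨k, n, rfl⟩
  have hx₀mem : x₀ ∈ s := by
    have : x₀ = (W ^ 0) ((V₂ ^ 0) x₀) := by simp
    rw [this]; exact hmemx 0 0
  -- invariance under V₁
  have h1 : ∀ x ∈ s, V₁ x ∈ Submodule.span ℂ s := by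
    rintro x (⟨k, n, rfl⟩ | ⟨k, n, rfl⟩)
    · cases n with
      | zero =>
        have : V₁ ((W ^ k) ((V₂ ^ 0) x₀)) = (W ^ k) ((V₁ ^ 1) x₀) := by
          rw [hcW₁]; simp
        rw [this]; exact Submodule.subset_span (hmemy k 0)
      | succ n =>
        have : V₁ ((W ^ k) ((V₂ ^ (n+1)) x₀)) = (W ^ (k+1)) ((V₂ ^ n) x₀) := by
          rw [hcW₁, hWsucc, hxsucc, ← hWz]
        rw [this]; exact Submodule.subset_span (hmemx (k+1) n)
    · have : V₁ ((W ^ k) ((V₁ ^ (n+1)) x₀)) = (W ^ k) ((V₁ ^ (n+2)) x₀) := by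
        rw [hcW₁, ← hysucc]
      rw [this]; exact Submodule.subset_span (hmemy k (n+1))
  -- invariance under V₂
  have h2 : ∀ x ∈ s, V₂ x ∈ Submodule.span ℂ s := by
    rintro x (⟨k, n, rfl⟩ | ⟨k, n, rfl⟩)
    · have : V₂ ((W ^ k) ((V₂ ^ n) x₀)) = (W ^ k) ((V₂ ^ (n+1)) x₀) := by
        rw [hcW₂, ← hxsucc]
      rw [this]; exact Submodule.subset_span (hmemx k (n+1))
    · cases n with
      | zero =>
        have : V₂ ((W ^ k) ((V₁ ^ 1) x₀)) = (W ^ (k+1)) ((V₂ ^ 0) x₀) := by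
          rw [hcW₂, hWsucc]
          congr 1
          rw [hWz]
          simp only [pow_one, pow_zero, ContinuousLinearMap.one_apply]
          exact (hp.pc x₀).symm
        rw [this]; exact Submodule.subset_span (hmemx (k+1) 0)
      | succ n =>
        have : V₂ ((W ^ k) ((V₁ ^ (n+2)) x₀)) = (W ^ (k+1)) ((V₁ ^ (n+1)) x₀) := by
          rw [hcW₂, hWsucc]
          congr 1
          rw [hysucc (n+1), hWz, hp.pc]
        rw [this]; exact Submodule.subset_span (hmemy (k+1) n)
  have hWsucc' : ∀ (k : ℕ) (z : H), (W ^ (k+1)) z = W ((W ^ k) z) := by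
    intro k z; rw [pow_succ']; rfl
  -- invariance under V₁*
  have h3 : ∀ x ∈ s, adjoint V₁ x ∈ Submodule.span ℂ s := by
    rintro x (⟨k, n, rfl⟩ | ⟨k, n, rfl⟩)
    · cases k with
      | zero =>
        simp only [pow_zero, ContinuousLinearMap.one_apply]
        rw [hxb1 n]
        exact Submodule.zero_mem _
      | succ k =>
        have heq : adjoint V₁ ((W ^ (k+1)) ((V₂ ^ n) x₀))
            = V₂ ((W ^ k) ((V₂ ^ n) x₀)) := by
          rw [hWsucc', hb₁W]
        rw [heq]
        exact h2 _ (hmemx k n)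
    · cases k with
      | zero =>
        simp only [pow_zero, ContinuousLinearMap.one_apply]
        rw [hyb1 n]
        cases n with
        | zero =>
          have hxx : x₀ = (W ^ 0) ((V₂ ^ 0) x₀) := by simp
          simp only [pow_zero, ContinuousLinearMap.one_apply]
          rw [hxx]
          exact Submodule.subset_span (hmemx 0 0)
        | succ n =>
          have : (V₁ ^ (n+1)) x₀ = (W ^ 0) ((V₁ ^ (n+1)) x₀) := by simp
          rw [this]
          exact Submodule.subset_span (hmemy 0 n)
      | succ k =>
        have heq : adjoint V₁ ((W ^ (k+1)) ((V₁ ^ (n+1)) x₀))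
            = V₂ ((W ^ k) ((V₁ ^ (n+1)) x₀)) := by
          rw [hWsucc', hb₁W]
        rw [heq]
        exact h2 _ (hmemy k n)
  -- invariance under V₂*
  have h4 : ∀ x ∈ s, adjoint V₂ x ∈ Submodule.span ℂ s := by
    rintro x (⟨k, n, rfl⟩ | ⟨k, n, rfl⟩)
    · cases k with
      | zero =>
        simp only [pow_zero, ContinuousLinearMap.one_apply]
        cases n with
        | zero =>
          simp only [pow_zero, ContinuousLinearMap.one_apply]
          rw [hb2]
          exact Submodule.zero_mem _
        | succ n =>
          rw [hxb2 n]
          have : (V₂ ^ n) x₀ = (W ^ 0) ((V₂ ^ n) x₀) := by simp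
          rw [this]
          exact Submodule.subset_span (hmemx 0 n)
      | succ k =>
        have heq : adjoint V₂ ((W ^ (k+1)) ((V₂ ^ n) x₀))
            = V₁ ((W ^ k) ((V₂ ^ n) x₀)) := by
          rw [hWsucc', hb₂W]
        rw [heq]
        exact h1 _ (hmemx k n)
    · cases k with
      | zero =>
        simp only [pow_zero, ContinuousLinearMap.one_apply]
        rw [hyb2 n]
        exact Submodule.zero_mem _
      | succ k =>
        have heq : adjoint V₂ ((W ^ (k+1)) ((V₁ ^ (n+1)) x₀))
            = V₁ ((W ^ k) ((V₁ ^ (n+1)) x₀)) := by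
          rw [hWsucc', hb₂W]
        rw [heq]
        exact h1 _ (hmemy k n)
  -- density
  have hdense := engine hirr s h1 h2 h3 h4 x₀ hx₀mem hx₀
  -- C maps generators into span {x₀}
  have hmaps : ∀ x ∈ s, defectOp V₁ V₂ x ∈ Submodule.span ℂ ({x₀} : Set H) := by
    rintro x (⟨k, n, rfl⟩ | ⟨k, n, rfl⟩)
    · cases k with
      | zero =>
        simp only [pow_zero, ContinuousLinearMap.one_apply]
        cases n with
        | zero =>
          simp only [pow_zero, ContinuousLinearMap.one_apply]
          have : defectOp V₁ V₂ x₀ = x₀ :=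
            (ker_char hp.pbc hp.pnorm₁ x₀).mpr ⟨hb1, hb2⟩
          rw [this]
          exact Submodule.mem_span_singleton_self x₀
        | succ n =>
          rw [hxsucc, pCa₂ hp, hxT' n, map_zero, neg_zero]
          exact Submodule.zero_mem _
      | succ k =>
        rw [hWsucc', hWz, pCV hp]
        exact Submodule.zero_mem _
    · cases k with
      | zero =>
        simp only [pow_zero, ContinuousLinearMap.one_apply]
        rw [hysucc, pCa₁ hp, hyT0 n, map_zero, neg_zero]
        exact Submodule.zero_mem _
      | succ k =>
        rw [hWsucc', hWz, pCV hp]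
        exact Submodule.zero_mem _
  have hle := trap s {x₀} (Set.finite_singleton x₀) (defectOp V₁ V₂) hmaps hdense
  have hr1 := rank_le_one_of_range_le (defectOp V₁ V₂) x₀ hle
  rw [hrank] at hr1
  norm_num at hr1

end KeyVanish


section RangeT
variable {V₁ V₂ : H →L[ℂ] H}

lemma mem_ker_sub_one_iff (C : H →L[ℂ] H) (x : H) :
    x ∈ LinearMap.ker ((C - 1 : H →L[ℂ] H) : H →ₗ[ℂ] H) ↔ C x = x := by
  constructor
  · intro h
    have : (C - 1) x = 0 := h
    simpa [sub_eq_zero] using this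
  · intro h
    show (C - 1) x = 0
    simp [h]

lemma range_le_kerCsub1 (hp : GoodPair V₁ V₂) :
    LinearMap.range (crossComm V₁ V₂ : H →ₗ[ℂ] H) ≤ LinearMap.ker ((defectOp V₁ V₂ - 1 : H →L[ℂ] H) : H →ₗ[ℂ] H) := by
  rintro _ ⟨z, rfl⟩
  rw [mem_ker_sub_one_iff]
  exact (ker_char hp.pbc hp.pnorm₁ _).mpr ⟨hp.pb₁T z, hp.pb₂T z⟩

lemma range_crossComm_eq (hp : GoodPair V₁ V₂) (hirr : IsIrreduciblePair V₁ V₂)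
    (hrank : Module.rank ℂ (LinearMap.range (defectOp V₁ V₂ : H →ₗ[ℂ] H)) = 3) :
    LinearMap.range (crossComm V₁ V₂ : H →ₗ[ℂ] H) = LinearMap.ker ((defectOp V₁ V₂ - 1 : H →L[ℂ] H) : H →ₗ[ℂ] H) := by
  have hrank' : Module.rank ℂ (LinearMap.range (defectOp V₁ V₂ : H →ₗ[ℂ] H)) = ((3:ℕ) : Cardinal) := by
    exact_mod_cast hrank
  haveI hfinC : FiniteDimensional ℂ (LinearMap.range (defectOp V₁ V₂ : H →ₗ[ℂ] H)) :=
    Module.finite_of_rank_eq_nat hrank'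
  have hker_le : LinearMap.ker ((defectOp V₁ V₂ - 1 : H →L[ℂ] H) : H →ₗ[ℂ] H) ≤ LinearMap.range (defectOp V₁ V₂ : H →ₗ[ℂ] H) := by
    intro x hx
    rw [mem_ker_sub_one_iff] at hx
    exact ⟨x, hx⟩
  haveI : FiniteDimensional ℂ (LinearMap.ker ((defectOp V₁ V₂ - 1 : H →L[ℂ] H) : H →ₗ[ℂ] H)) :=
    Submodule.finiteDimensional_of_le hker_le
  have hT_le := range_le_kerCsub1 hp
  haveI : FiniteDimensional ℂ (LinearMap.range (crossComm V₁ V₂ : H →ₗ[ℂ] H)) :=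
    Submodule.finiteDimensional_of_le hT_le
  refine le_antisymm hT_le ?_
  intro x hx
  rw [mem_ker_sub_one_iff] at hx
  obtain ⟨hb1x, hb2x⟩ := (ker_char hp.pbc hp.pnorm₁ x).mp hx
  set K := LinearMap.range (crossComm V₁ V₂ : H →ₗ[ℂ] H) with hK
  set p := (Submodule.orthogonalProjectionOnto K x : H) with hpdef
  have hpK : p ∈ K := SetLike.coe_mem _
  obtain ⟨w, hw⟩ := hpK
  set q := x - p with hq
  have hqorth : q ∈ Kᗮ := Submodule.sub_starProjection_mem_orthogonal x
  have hT'q : adjoint (crossComm V₁ V₂) q = 0 := by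
    have h0 : ⟪adjoint (crossComm V₁ V₂) q, adjoint (crossComm V₁ V₂) q⟫ = 0 := by
      rw [adjoint_inner_left]
      have hmem : crossComm V₁ V₂ (adjoint (crossComm V₁ V₂) q) ∈ K := ⟨_, rfl⟩
      have := (Submodule.mem_orthogonal K q).mp hqorth _ hmem
      rw [← inner_conj_symm, this, map_zero]
    exact inner_self_eq_zero.mp h0
  have hb1q : adjoint V₁ q = 0 := by
    rw [hq, map_sub, hb1x, ← hw, ContinuousLinearMap.coe_coe, hp.pb₁T, sub_self]
  have hb2q : adjoint V₂ q = 0 := by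
    rw [hq, map_sub, hb2x, ← hw, ContinuousLinearMap.coe_coe, hp.pb₂T, sub_self]
  have hq0 : q = 0 := key_vanish hp hirr hrank q hb1q hb2q hT'q
  have : x = p := by rw [← sub_eq_zero]; exact hq0
  rw [this]
  exact ⟨w, hw⟩

end RangeT


section Gop


lemma adjoint_one' {H : Type*} [NormedAddCommGroup H] [InnerProductSpace ℂ H] [CompleteSpace H] :
    adjoint (1 : H →L[ℂ] H) = 1 := by
  rw [ContinuousLinearMap.one_def, adjoint_id]

noncomputable def Qop (V₁ : H →L[ℂ] H) : H →L[ℂ] H := 1 - V₁ ∘L adjoint V₁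

noncomputable def Pop (V₁ V₂ : H →L[ℂ] H) : H →L[ℂ] H := V₂ ∘L Qop V₁ ∘L adjoint V₂

noncomputable def PWop (V₁ V₂ : H →L[ℂ] H) : H →L[ℂ] H :=
  1 - (V₁ ∘L V₂) ∘L adjoint (V₁ ∘L V₂)

noncomputable def Gop (V₁ V₂ : H →L[ℂ] H) : H →L[ℂ] H :=
  Qop V₁ + Pop V₁ V₂ - PWop V₁ V₂

variable {V₁ V₂ : H →L[ℂ] H}

lemma pQ (V₁ : H →L[ℂ] H) (z : H) : Qop V₁ z = z - V₁ (adjoint V₁ z) := by simp [Qop]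

lemma pP (V₁ V₂ : H →L[ℂ] H) (z : H) :
    Pop V₁ V₂ z = V₂ (adjoint V₂ z) - V₂ (V₁ (adjoint V₁ (adjoint V₂ z))) := by
  simp [Pop, Qop]

lemma pPW (V₁ V₂ : H →L[ℂ] H) (z : H) :
    PWop V₁ V₂ z = z - V₁ (V₂ (adjoint V₂ (adjoint V₁ z))) := by
  simp [PWop, adjoint_comp]

lemma pG (V₁ V₂ : H →L[ℂ] H) (z : H) :
    Gop V₁ V₂ z = Qop V₁ z + Pop V₁ V₂ z - PWop V₁ V₂ z := by simp [Gop]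

lemma adj_Qop (V₁ : H →L[ℂ] H) : adjoint (Qop V₁) = Qop V₁ := by
  rw [Qop, map_sub, adjoint_one', adjoint_comp, adjoint_adjoint]

lemma adj_Pop (V₁ V₂ : H →L[ℂ] H) : adjoint (Pop V₁ V₂) = Pop V₁ V₂ := by
  rw [Pop, adjoint_comp, adjoint_comp, adjoint_adjoint, adj_Qop]
  rfl

lemma adj_PWop (V₁ V₂ : H →L[ℂ] H) : adjoint (PWop V₁ V₂) = PWop V₁ V₂ := by
  rw [PWop, map_sub, adjoint_one', adjoint_comp, adjoint_adjoint]

lemma adj_Gop (V₁ V₂ : H →L[ℂ] H) : adjoint (Gop V₁ V₂) = Gop V₁ V₂ := by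
  rw [Gop, map_sub, map_add, adj_Qop, adj_Pop, adj_PWop]

lemma pGsym (V₁ V₂ : H →L[ℂ] H) (z w : H) : ⟪Gop V₁ V₂ z, w⟫ = ⟪z, Gop V₁ V₂ w⟫ := by
  rw [← adjoint_inner_left, adj_Gop]

variable (hp : GoodPair V₁ V₂)
include hp

lemma pGC (z : H) : Gop V₁ V₂ (defectOp V₁ V₂ z) = -(defectOp V₁ V₂ (Gop V₁ V₂ z)) := by
  simp only [pG, pQ, pP, pPW, GoodPair.pC, map_sub, map_add, hp.pa₁, hp.pa₂, hp.pbc, hp.pc,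
    hp.pr1, hp.pr2, hp.pr3]
  abel

lemma pGG (z : H) :
    Gop V₁ V₂ (Gop V₁ V₂ z) = PWop V₁ V₂ z - defectOp V₁ V₂ (defectOp V₁ V₂ z) := by
  simp only [pG, pQ, pP, pPW, GoodPair.pC, map_sub, map_add, hp.pa₁, hp.pa₂, hp.pbc, hp.pc,
    hp.pr1, hp.pr2, hp.pr3]
  abel

lemma pCsym (z w : H) : ⟪defectOp V₁ V₂ z, w⟫ = ⟪z, defectOp V₁ V₂ w⟫ := by
  have h1 : ⟪V₁ (adjoint V₁ z), w⟫ = ⟪z, V₁ (adjoint V₁ w)⟫ := by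
    calc ⟪V₁ (adjoint V₁ z), w⟫ = ⟪adjoint V₁ z, adjoint V₁ w⟫ :=
          (adjoint_inner_right V₁ _ _).symm
      _ = ⟪z, V₁ (adjoint V₁ w)⟫ := adjoint_inner_left V₁ (adjoint V₁ w) z
  have h2 : ⟪V₂ (adjoint V₂ z), w⟫ = ⟪z, V₂ (adjoint V₂ w)⟫ := by
    calc ⟪V₂ (adjoint V₂ z), w⟫ = ⟪adjoint V₂ z, adjoint V₂ w⟫ :=
          (adjoint_inner_right V₂ _ _).symm
      _ = ⟪z, V₂ (adjoint V₂ w)⟫ := adjoint_inner_left V₂ (adjoint V₂ w) z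
  have h3 : ⟪V₁ (V₂ (adjoint V₁ (adjoint V₂ z))), w⟫
      = ⟪z, V₁ (V₂ (adjoint V₁ (adjoint V₂ w)))⟫ := by
    calc ⟪V₁ (V₂ (adjoint V₁ (adjoint V₂ z))), w⟫
        = ⟪V₂ (adjoint V₁ (adjoint V₂ z)), adjoint V₁ w⟫ := (adjoint_inner_right V₁ _ _).symm
      _ = ⟪adjoint V₁ (adjoint V₂ z), adjoint V₂ (adjoint V₁ w)⟫ :=
          (adjoint_inner_right V₂ _ _).symm
      _ = ⟪adjoint V₂ z, V₁ (adjoint V₂ (adjoint V₁ w))⟫ :=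
          adjoint_inner_left V₁ (adjoint V₂ (adjoint V₁ w)) (adjoint V₂ z)
      _ = ⟪z, V₂ (V₁ (adjoint V₂ (adjoint V₁ w)))⟫ :=
          adjoint_inner_left V₂ (V₁ (adjoint V₂ (adjoint V₁ w))) z
      _ = ⟪z, V₁ (V₂ (adjoint V₁ (adjoint V₂ w)))⟫ := by
          rw [← hp.pc, ← hp.pbc]
  rw [GoodPair.pC, GoodPair.pC]
  simp only [inner_sub_left, inner_add_left, inner_sub_right, inner_add_right, h1, h2, h3]

end Gop

section Cases
variable {V₁ V₂ : H →L[ℂ] H}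

lemma case_a0 (hp : GoodPair V₁ V₂) (hirr : IsIrreduciblePair V₁ V₂)
    (hrank : Module.rank ℂ (LinearMap.range (defectOp V₁ V₂ : H →ₗ[ℂ] H)) = 3)
    (h0 : LinearMap.ker ((defectOp V₁ V₂ - 1 : H →L[ℂ] H) : H →ₗ[ℂ] H) = ⊥) : False := by
  have hTle := range_le_kerCsub1 hp
  rw [h0, le_bot_iff] at hTle
  have hT : ∀ z : H, crossComm V₁ V₂ z = 0 := by
    intro z
    have hmem : crossComm V₁ V₂ z ∈ LinearMap.range (crossComm V₁ V₂ : H →ₗ[ℂ] H) := ⟨z, rfl⟩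
    rw [hTle] at hmem
    simpa using hmem
  have hT' : ∀ z : H, adjoint (crossComm V₁ V₂) z = 0 := by
    intro z
    have h := hp.pnormT z
    rw [hT z, norm_zero] at h
    exact (norm_eq_zero.mp h.symm)
  have pd1 : ∀ z : H, adjoint V₂ (V₁ z) = V₁ (adjoint V₂ z) := by
    intro z
    have h := GoodPair.pT V₁ V₂ z
    rw [hT z] at h
    exact eq_of_sub_eq_zero h.symm
  have pd2 : ∀ z : H, adjoint V₁ (V₂ z) = V₂ (adjoint V₁ z) := by
    intro z
    have h := GoodPair.pT' V₁ V₂ z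
    rw [hT' z] at h
    exact eq_of_sub_eq_zero h.symm
  have hCzero : ∀ z : H, defectOp V₁ V₂ z = 0 := by
    intro z
    have hb1C : adjoint V₁ (defectOp V₁ V₂ z) = 0 := by
      rw [GoodPair.pC]
      simp only [map_sub, map_add, hp.pa₁, pd2]
      abel
    have hb2C : adjoint V₂ (defectOp V₁ V₂ z) = 0 := by
      rw [GoodPair.pC]
      simp only [map_sub, map_add, pd1, hp.pa₂, hp.pa₁]
      have hswap : adjoint V₂ (adjoint V₁ z) = adjoint V₁ (adjoint V₂ z) := (hp.pbc z).symm
      rw [hswap]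
      abel
    have hmem : defectOp V₁ V₂ z ∈ LinearMap.ker ((defectOp V₁ V₂ - 1 : H →L[ℂ] H) : H →ₗ[ℂ] H) := by
      rw [mem_ker_sub_one_iff]
      exact (ker_char hp.pbc hp.pnorm₁ _).mpr ⟨hb1C, hb2C⟩
    rw [h0] at hmem
    simpa using hmem
  have hCbot : LinearMap.range (defectOp V₁ V₂ : H →ₗ[ℂ] H) = ⊥ := by
    rw [Submodule.eq_bot_iff]
    rintro _ ⟨z, rfl⟩
    exact hCzero z
  rw [hCbot] at hrank
  rw [rank_bot] at hrank
  norm_num at hrank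

lemma case_a3 (hp : GoodPair V₁ V₂) (hirr : IsIrreduciblePair V₁ V₂)
    (hrank : Module.rank ℂ (LinearMap.range (defectOp V₁ V₂ : H →ₗ[ℂ] H)) = 3)
    (hfinE : Module.finrank ℂ (LinearMap.ker ((defectOp V₁ V₂ - 1 : H →L[ℂ] H) : H →ₗ[ℂ] H)) = 3) : False := by
  have hrank' : Module.rank ℂ (LinearMap.range (defectOp V₁ V₂ : H →ₗ[ℂ] H)) = ((3:ℕ) : Cardinal) := by
    exact_mod_cast hrank
  haveI hfinC : FiniteDimensional ℂ (LinearMap.range (defectOp V₁ V₂ : H →ₗ[ℂ] H)) :=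
    Module.finite_of_rank_eq_nat hrank'
  have hfinrankC : Module.finrank ℂ (LinearMap.range (defectOp V₁ V₂ : H →ₗ[ℂ] H)) = 3 := by
    have := Module.finrank_eq_rank ℂ (LinearMap.range (defectOp V₁ V₂ : H →ₗ[ℂ] H))
    rw [hrank'] at this
    exact_mod_cast this
  have hker_le : LinearMap.ker ((defectOp V₁ V₂ - 1 : H →L[ℂ] H) : H →ₗ[ℂ] H) ≤ LinearMap.range (defectOp V₁ V₂ : H →ₗ[ℂ] H) := by
    intro x hx
    rw [mem_ker_sub_one_iff] at hx
    exact ⟨x, hx⟩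
  have hEeqR : LinearMap.ker ((defectOp V₁ V₂ - 1 : H →L[ℂ] H) : H →ₗ[ℂ] H) = LinearMap.range (defectOp V₁ V₂ : H →ₗ[ℂ] H) :=
    Submodule.eq_of_le_of_finrank_le hker_le (by rw [hfinrankC, hfinE])
  -- T = 0
  have hT : ∀ z : H, crossComm V₁ V₂ z = 0 := by
    intro z
    have h1 := pCa₁ hp z
    have hmem : defectOp V₁ V₂ (V₁ z) ∈ LinearMap.range (defectOp V₁ V₂ : H →ₗ[ℂ] H) := ⟨V₁ z, rfl⟩
    rw [← hEeqR, mem_ker_sub_one_iff] at hmem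
    obtain ⟨_, hb2⟩ := (ker_char hp.pbc hp.pnorm₁ _).mp hmem
    have h2 := congrArg (adjoint V₂) h1
    rw [hb2, map_neg, hp.pa₂] at h2
    have := h2.symm
    rw [neg_eq_zero] at this
    exact this
  -- then ker(C-1) = range T = 0, contradiction with finrank 3
  have hEbot : LinearMap.ker ((defectOp V₁ V₂ - 1 : H →L[ℂ] H) : H →ₗ[ℂ] H) = ⊥ := by
    rw [← range_crossComm_eq hp hirr hrank, Submodule.eq_bot_iff]
    rintro _ ⟨z, rfl⟩
    exact hT z
  rw [hEbot, finrank_bot] at hfinE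
  norm_num at hfinE

lemma case_a2 (hp : GoodPair V₁ V₂) (hirr : IsIrreduciblePair V₁ V₂)
    (hrank : Module.rank ℂ (LinearMap.range (defectOp V₁ V₂ : H →ₗ[ℂ] H)) = 3)
    (hfinE : Module.finrank ℂ (LinearMap.ker ((defectOp V₁ V₂ - 1 : H →L[ℂ] H) : H →ₗ[ℂ] H)) = 2) : False := by
  classical
  set C := defectOp V₁ V₂ with hCdef
  set R := LinearMap.range (C : H →ₗ[ℂ] H) with hRdef
  set E₁ := LinearMap.ker ((C - 1 : H →L[ℂ] H) : H →ₗ[ℂ] H) with hE₁def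
  have hCsym : ∀ z w : H, ⟪C z, w⟫ = ⟪z, C w⟫ := fun z w => pCsym hp z w
  -- finite dimensionality bookkeeping
  have hrank' : Module.rank ℂ R = ((3:ℕ) : Cardinal) := by exact_mod_cast hrank
  haveI hfinC : FiniteDimensional ℂ R := Module.finite_of_rank_eq_nat hrank'
  have hfinrankC : Module.finrank ℂ R = 3 := by
    have := Module.finrank_eq_rank ℂ R
    rw [hrank'] at this
    exact_mod_cast this
  have hker_le : E₁ ≤ R := by
    intro x hx
    rw [hE₁def, mem_ker_sub_one_iff] at hx
    exact ⟨x, hx⟩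
  haveI : FiniteDimensional ℂ E₁ := Submodule.finiteDimensional_of_le hker_le
  -- the orthogonal complement of E₁ inside R
  set L : Submodule ℂ H := R ⊓ E₁ᗮ with hLdef
  haveI : FiniteDimensional ℂ L := Submodule.finiteDimensional_of_le inf_le_left
  have hfixE : ∀ x ∈ E₁, C x = x := by
    intro x hx
    rw [hE₁def, mem_ker_sub_one_iff] at hx
    exact hx
  have hsup : E₁ ⊔ L = R := by
    apply le_antisymm (sup_le hker_le inf_le_left)
    intro r hr
    have hp1 : (Submodule.orthogonalProjectionOnto E₁ r : H) ∈ E₁ := SetLike.coe_mem _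
    have hq : r - Submodule.orthogonalProjectionOnto E₁ r ∈ E₁ᗮ := Submodule.sub_starProjection_mem_orthogonal r
    have hqR : r - Submodule.orthogonalProjectionOnto E₁ r ∈ R := Submodule.sub_mem R hr (hker_le hp1)
    have : r = (Submodule.orthogonalProjectionOnto E₁ r : H) + (r - Submodule.orthogonalProjectionOnto E₁ r) := by abel
    rw [this]
    exact Submodule.add_mem _ (Submodule.mem_sup_left hp1)
      (Submodule.mem_sup_right ⟨hqR, hq⟩)
  have hinf : E₁ ⊓ L = ⊥ := by
    rw [Submodule.eq_bot_iff]
    rintro x ⟨hx1, _, hx2⟩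
    exact inner_self_eq_zero.mp ((Submodule.mem_orthogonal E₁ x).mp hx2 x hx1)
  have hfinL : Module.finrank ℂ L = 1 := by
    have hadd := Submodule.finrank_sup_add_finrank_inf_eq E₁ L
    rw [hsup, hinf, hfinrankC, hfinE] at hadd
    simp only [finrank_bot, add_zero] at hadd
    omega
  -- a generator of L
  have hLne : L ≠ ⊥ := by
    intro h
    rw [h] at hfinL
    rw [finrank_bot] at hfinL
    norm_num at hfinL
  obtain ⟨l, hlL, hl0⟩ := Submodule.exists_mem_ne_zero_of_ne_bot hLne
  have hlR : l ∈ R := hlL.1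
  have hlorth : l ∈ E₁ᗮ := hlL.2
  have hLspan : L = Submodule.span ℂ {l} := by
    apply (Submodule.eq_of_le_of_finrank_le ?_ ?_).symm
    · rw [Submodule.span_le, Set.singleton_subset_iff]; exact hlL
    · rw [hfinL, finrank_span_singleton hl0]
  -- C preserves L, eigenvalue c
  have hCL : ∀ x ∈ L, C x ∈ L := by
    rintro x ⟨hxR, hxorth⟩
    refine ⟨⟨x, rfl⟩, (Submodule.mem_orthogonal E₁ (C x)).mpr ?_⟩
    intro u hu
    have : ⟪u, C x⟫ = ⟪C u, x⟫ := (hCsym u x).symm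
    rw [this, hfixE u hu]
    exact (Submodule.mem_orthogonal E₁ x).mp hxorth u hu
  obtain ⟨c, hc⟩ := Submodule.mem_span_singleton.mp (by rw [← hLspan]; exact hCL l hlL)
  -- hc : c • l = C l
  have hc0 : c ≠ 0 := by
    intro h
    rw [h, zero_smul] at hc
    obtain ⟨y, hy⟩ := hlR
    have : ⟪l, l⟫ = 0 := by
      calc ⟪l, l⟫ = ⟪C y, l⟫ := by rw [← hy]; rfl
        _ = ⟪y, C l⟫ := hCsym y l
        _ = 0 := by rw [← hc, inner_zero_right]
    exact hl0 (inner_self_eq_zero.mp this)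
  have hc1 : c ≠ 1 := by
    intro h
    rw [h, one_smul] at hc
    have hlE : l ∈ E₁ := by
      rw [hE₁def, mem_ker_sub_one_iff]
      exact hc.symm
    have := (Submodule.mem_orthogonal E₁ l).mp hlorth l hlE
    exact hl0 (inner_self_eq_zero.mp this)
  have hCl : C l = c • l := hc.symm
  -- G preserves R
  have hGR : ∀ x ∈ R, Gop V₁ V₂ x ∈ R := by
    rintro _ ⟨y, rfl⟩
    refine ⟨-(Gop V₁ V₂ y), ?_⟩
    show C (-(Gop V₁ V₂ y)) = Gop V₁ V₂ (C y)
    rw [map_neg, pGC hp y]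
  have hPWl : PWop V₁ V₂ l = l := by
    obtain ⟨y, hy⟩ := hlR
    have hbb : adjoint V₂ (adjoint V₁ l) = 0 := by
      rw [← hy, ContinuousLinearMap.coe_coe]
      have hb1C : adjoint V₁ (C y) = -(adjoint (crossComm V₁ V₂) (adjoint V₂ y)) := by
        show adjoint V₁ (defectOp V₁ V₂ y) = _
        rw [GoodPair.pC, GoodPair.pT']
        simp only [map_sub, map_add, hp.pa₁]
        abel
      rw [hb1C, map_neg, hp.pb₂T', neg_zero]
    rw [pPW, hbb, map_zero, map_zero, sub_zero]
  have hcm1 : c = -1 := by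
    by_contra hcne
    have hGlR : Gop V₁ V₂ l ∈ R := hGR l hlR
    set e : H := (Submodule.orthogonalProjectionOnto E₁ (Gop V₁ V₂ l) : H) with he
    have heE : e ∈ E₁ := SetLike.coe_mem _
    have hdiffL : Gop V₁ V₂ l - e ∈ L :=
      ⟨Submodule.sub_mem R hGlR (hker_le heE), Submodule.sub_starProjection_mem_orthogonal _⟩
    obtain ⟨t, ht⟩ := Submodule.mem_span_singleton.mp (by rw [← hLspan]; exact hdiffL)
    have hGl : Gop V₁ V₂ l = e + t • l := by rw [ht]; abel
    have h1 : C (Gop V₁ V₂ l) = e + (t*c) • l := by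
      rw [hGl, map_add, map_smul, hfixE e heE, hCl, smul_smul]
    have h2 : C (Gop V₁ V₂ l) = (-c) • e + (-(c*t)) • l := by
      have h3 := pGC hp l
      have h4 : C (Gop V₁ V₂ l) = -(Gop V₁ V₂ (C l)) := by rw [h3, neg_neg]
      rw [h4, hCl, map_smul, hGl, smul_add, smul_smul]
      rw [neg_add]
      simp [neg_smul]
    have hinner_le : ⟪l, e⟫ = 0 := by
      rw [← inner_conj_symm]
      rw [(Submodule.mem_orthogonal E₁ l).mp hlorth e heE]
      simp
    have hee : ⟪e, e⟫ = 0 := by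
      have h5 : e + (t*c) • l = (-c) • e + (-(c*t)) • l := by rw [← h1, h2]
      have h6 := congrArg (fun w => ⟪w, e⟫) h5
      simp only [inner_add_left, inner_smul_left, hinner_le, mul_zero, add_zero] at h6
      -- h6 : ⟪e,e⟫ = conj (-c) * ⟪e,e⟫
      have h7 : (1 - (starRingEnd ℂ) (-c)) * ⟪e, e⟫ = 0 := by
        linear_combination h6
      rcases mul_eq_zero.mp h7 with h8 | h8
      · exfalso
        apply hcne
        have : (starRingEnd ℂ) (-c) = 1 := by
          have := sub_eq_zero.mp h8
          exact this.symm
        have h9 : -c = 1 := by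
          have := congrArg (starRingEnd ℂ) this
          simpa using this
        linear_combination -h9
      · exact h8
    have he0 : e = 0 := inner_self_eq_zero.mp hee
    have ht0 : t = 0 := by
      have h5 : e + (t*c) • l = (-c) • e + (-(c*t)) • l := by rw [← h1, h2]
      rw [he0] at h5
      simp only [zero_add, smul_zero, add_zero] at h5
      -- h5 : (t*c) • l = (-(c*t)) • l
      have h6 : (t*c - (-(c*t))) • l = 0 := by
        rw [sub_smul, h5]
        abel
      have h7 := smul_eq_zero.mp h6
      rcases h7 with h7 | h7
      · have : (2:ℂ) * (c * t) = 0 := by linear_combination h7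
        have := mul_eq_zero.mp this
        rcases this with h8 | h8
        · norm_num at h8
        · rcases mul_eq_zero.mp h8 with h9 | h9
          · exact absurd h9 hc0
          · exact h9
      · exact absurd h7 hl0
    have hGl0 : Gop V₁ V₂ l = 0 := by rw [hGl, he0, ht0]; simp
    have hfin : (1 - c^2) • l = 0 := by
      have h8 := pGG hp l
      rw [hGl0, map_zero] at h8
      have h9 : PWop V₁ V₂ l - C (C l) = (1 - c^2) • l := by
        rw [hPWl, hCl, map_smul, hCl, smul_smul, sub_smul, one_smul]
        ring_nf
      rw [h9] at h8
      exact h8.symm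
    have h10 : (1 : ℂ) - c^2 = 0 := by
      rcases smul_eq_zero.mp hfin with h | h
      · exact h
      · exact absurd h hl0
    have h11 : (c - 1) * (c + 1) = 0 := by linear_combination -h10
    rcases mul_eq_zero.mp h11 with h | h
    · exact hc1 (by linear_combination h)
    · exact hcne (by linear_combination h)
  -- normalize l
  have hCl' : C l = -l := by rw [hCl, hcm1]; simp
  have hln : ‖l‖ ≠ 0 := norm_ne_zero_iff.mpr hl0
  set n₀ : H := (↑‖l‖ : ℂ)⁻¹ • l with hn₀def
  have hn₀norm : ‖n₀‖ = 1 := by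
    rw [hn₀def, norm_smul, norm_inv]
    simp only [Complex.norm_real, Real.norm_eq_abs, abs_norm]
    field_simp
  have hn₀0 : n₀ ≠ 0 := by
    intro h
    rw [h, norm_zero] at hn₀norm
    norm_num at hn₀norm
  have hCn₀ : C n₀ = -n₀ := by
    rw [hn₀def, map_smul, hCl', smul_neg]
  have hn₀L : n₀ ∈ L := Submodule.smul_mem L _ hlL
  have hspan_n : Submodule.span ℂ {n₀} = L := by
    apply Submodule.eq_of_le_of_finrank_le
    · rw [Submodule.span_le, Set.singleton_subset_iff]; exact hn₀L
    · rw [hfinL, finrank_span_singleton hn₀0]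
  obtain ⟨hA1, hA2, hBB⟩ := (neg_char hp.pbc hp.pnorm₁ hp.pnorm₂ n₀).mp hCn₀
  set u₀ : H := adjoint V₂ n₀ with hu₀def
  have hu₀norm : ‖u₀‖ = 1 := by
    calc ‖u₀‖ = ‖V₂ u₀‖ := (hp.pnorm₂ u₀).symm
      _ = ‖n₀‖ := by rw [hA2]
      _ = 1 := hn₀norm
  have hu₀0 : u₀ ≠ 0 := by
    intro h
    rw [h, norm_zero] at hu₀norm
    norm_num at hu₀norm
  have hbbn : adjoint V₂ (adjoint V₁ n₀) = 0 := by
    rw [← hp.pbc]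
    exact hBB
  have hu₀T : crossComm V₁ V₂ (adjoint V₁ n₀) = u₀ := by
    rw [GoodPair.pT, hA1, hbbn, map_zero, sub_zero]
  have hu₀E : u₀ ∈ E₁ := range_le_kerCsub1 hp ⟨adjoint V₁ n₀, hu₀T⟩
  obtain ⟨hbu1, hbu2⟩ := (ker_char hp.pbc hp.pnorm₁ u₀).mp (hfixE u₀ hu₀E)
  have hb₁n_norm : ‖adjoint V₁ n₀‖ = 1 := by
    calc ‖adjoint V₁ n₀‖ = ‖V₁ (adjoint V₁ n₀)‖ := (hp.pnorm₁ _).symm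
      _ = ‖n₀‖ := by rw [hA1]
      _ = 1 := hn₀norm
  have hT'u : adjoint (crossComm V₁ V₂) u₀ = adjoint V₁ n₀ := by
    rw [GoodPair.pT', hA2, hbu1, map_zero, sub_zero]
  have hTu_norm : ‖crossComm V₁ V₂ u₀‖ = 1 := by rw [hp.pnormT, hT'u, hb₁n_norm]
  set m : H := V₁ u₀ with hmdef
  have hm_norm : ‖m‖ = 1 := by rw [hmdef, hp.pnorm₁, hu₀norm]
  have hb2m : adjoint V₂ m = crossComm V₁ V₂ u₀ := by
    have h := GoodPair.pT V₁ V₂ u₀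
    rw [hbu2, map_zero, sub_zero] at h
    exact h.symm
  have hA2m : V₂ (adjoint V₂ m) = m := by
    apply pproj hp.pnorm₂
    rw [hb2m, hTu_norm, hm_norm]
  have hA1m : V₁ (adjoint V₁ m) = m := by rw [hmdef, hp.pa₁]
  have hBBm : adjoint V₁ (adjoint V₂ m) = 0 := by rw [hb2m]; exact hp.pb₁T u₀
  have hCm : C m = -m := (neg_char hp.pbc hp.pnorm₁ hp.pnorm₂ m).mpr ⟨hA1m, hA2m, hBBm⟩
  have hmL : m ∈ L := by
    constructor
    · exact ⟨-m, by rw [ContinuousLinearMap.coe_coe, map_neg, hCm, neg_neg]⟩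
    · refine (Submodule.mem_orthogonal E₁ m).mpr ?_
      intro u hu
      have h1 : ⟪u, m⟫ = -⟪u, m⟫ := by
        calc ⟪u, m⟫ = ⟪u, -C m⟫ := by rw [hCm, neg_neg]
          _ = -⟪u, C m⟫ := by rw [inner_neg_right]
          _ = -⟪C u, m⟫ := by rw [hCsym]
          _ = -⟪u, m⟫ := by rw [hfixE u hu]
      have h2 : (2:ℂ) * ⟪u, m⟫ = 0 := by linear_combination h1
      rcases mul_eq_zero.mp h2 with h3 | h3
      · norm_num at h3
      · exact h3
  obtain ⟨ω, hω⟩ := Submodule.mem_span_singleton.mp (by rw [hspan_n]; exact hmL)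
  have hωabs : ‖ω‖ = 1 := by
    have h := congrArg norm hω
    rw [norm_smul, hn₀norm, hm_norm, mul_one] at h
    exact h
  have hb1n₀ : adjoint V₁ n₀ = (starRingEnd ℂ ω) • u₀ := by
    have hinner : ⟪adjoint V₁ n₀, u₀⟫ = ω := by
      calc ⟪adjoint V₁ n₀, u₀⟫ = ⟪n₀, V₁ u₀⟫ := adjoint_inner_left V₁ u₀ n₀
        _ = ⟪n₀, ω • n₀⟫ := by rw [← hmdef, ← hω]
        _ = ω * ⟪n₀, n₀⟫ := inner_smul_right _ _ _
        _ = ω := by rw [inner_self_eq_norm_sq_to_K, hn₀norm]; simp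
    have hd : ‖adjoint V₁ n₀ - (starRingEnd ℂ ω) • u₀‖ ^ 2 = 0 := by
      rw [@norm_sub_sq ℂ]
      have h1 : ⟪adjoint V₁ n₀, (starRingEnd ℂ ω) • u₀⟫ = 1 := by
        rw [inner_smul_right, hinner]
        have : (starRingEnd ℂ) ω * ω = ↑(‖ω‖ ^ 2) := by
          rw [RCLike.conj_mul]
          norm_cast
        rw [this, hωabs]
        norm_num
      rw [h1, hb₁n_norm, norm_smul, RCLike.norm_conj, hωabs, hu₀norm]
      norm_num
    have := pow_eq_zero_iff (n := 2) (by norm_num) |>.mp hd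
    rw [norm_eq_zero, sub_eq_zero] at this
    exact this
  -- action table
  have ha₁u : V₁ u₀ = ω • n₀ := by rw [← hmdef]; exact hω.symm
  have ha₂u : V₂ u₀ = n₀ := hA2
  have hb2n : adjoint V₂ n₀ = u₀ := rfl
  have ha₂n : V₂ n₀ = (starRingEnd ℂ ω) • (V₁ (V₂ u₀)) := by
    calc V₂ n₀ = V₂ (V₁ (adjoint V₁ n₀)) := by rw [hA1]
      _ = V₂ (V₁ ((starRingEnd ℂ ω) • u₀)) := by rw [hb1n₀]
      _ = (starRingEnd ℂ ω) • V₂ (V₁ u₀) := by rw [map_smul, map_smul]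
      _ = (starRingEnd ℂ ω) • V₁ (V₂ u₀) := by rw [hp.pc]
  have ha₁n : V₁ n₀ = V₁ (V₂ u₀) := by rw [hA2]
  -- W-power helpers
  set W : H →L[ℂ] H := V₁ * V₂ with hW
  have hWz : ∀ z : H, W z = V₁ (V₂ z) := fun z => rfl
  have hWsucc : ∀ (k : ℕ) (z : H), (W ^ (k+1)) z = (W ^ k) (W z) := by
    intro k z; rw [pow_succ]; rfl
  have hWsucc' : ∀ (k : ℕ) (z : H), (W ^ (k+1)) z = W ((W ^ k) z) := by
    intro k z; rw [pow_succ']; rfl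
  have hcomm₁ : Commute V₁ W := by
    rw [hW, Commute, SemiconjBy, mul_assoc, hp.comm, ← mul_assoc]
  have hcomm₂ : Commute V₂ W := by
    rw [hW, Commute, SemiconjBy, ← mul_assoc, ← hp.comm, mul_assoc]
  have hcW₁ : ∀ (k : ℕ) (z : H), V₁ ((W ^ k) z) = (W ^ k) (V₁ z) := by
    intro k z
    have := DFunLike.congr_fun ((hcomm₁.pow_right k) : V₁ * W ^ k = W ^ k * V₁) z
    simpa [ContinuousLinearMap.mul_apply] using this
  have hcW₂ : ∀ (k : ℕ) (z : H), V₂ ((W ^ k) z) = (W ^ k) (V₂ z) := by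
    intro k z
    have := DFunLike.congr_fun ((hcomm₂.pow_right k) : V₂ * W ^ k = W ^ k * V₂) z
    simpa [ContinuousLinearMap.mul_apply] using this
  have hb₁W : ∀ z : H, adjoint V₁ (W z) = V₂ z := by
    intro z; rw [hWz]; exact hp.pa₁ _
  have hb₂W : ∀ z : H, adjoint V₂ (W z) = V₁ z := by
    intro z; rw [hWz]; exact hp.pr3 z
  -- generating set
  set s₂ : Set H := {h : H | ∃ k : ℕ, h = (W ^ k) u₀ ∨ h = (W ^ k) n₀} with hs₂
  have hmemu : ∀ k : ℕ, (W ^ k) u₀ ∈ s₂ := fun k => ⟨k, Or.inl rfl⟩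
  have hmemn : ∀ k : ℕ, (W ^ k) n₀ ∈ s₂ := fun k => ⟨k, Or.inr rfl⟩
  have hu₀s : u₀ ∈ s₂ := by
    have : u₀ = (W ^ 0) u₀ := by simp
    rw [this]; exact hmemu 0
  have hn₀s : n₀ ∈ s₂ := by
    have : n₀ = (W ^ 0) n₀ := by simp
    rw [this]; exact hmemn 0
  -- invariances
  have h1 : ∀ x ∈ s₂, V₁ x ∈ Submodule.span ℂ s₂ := by
    rintro x ⟨k, rfl | rfl⟩
    · have : V₁ ((W ^ k) u₀) = ω • ((W ^ k) n₀) := by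
        rw [hcW₁, ha₁u, map_smul]
      rw [this]
      exact Submodule.smul_mem _ ω (Submodule.subset_span (hmemn k))
    · have : V₁ ((W ^ k) n₀) = (W ^ (k+1)) u₀ := by
        rw [hcW₁, ha₁n, ← hWz, ← hWsucc]
      rw [this]
      exact Submodule.subset_span (hmemu (k+1))
  have h2 : ∀ x ∈ s₂, V₂ x ∈ Submodule.span ℂ s₂ := by
    rintro x ⟨k, rfl | rfl⟩
    · have : V₂ ((W ^ k) u₀) = (W ^ k) n₀ := by rw [hcW₂, ha₂u]
      rw [this]
      exact Submodule.subset_span (hmemn k)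
    · have : V₂ ((W ^ k) n₀) = (starRingEnd ℂ ω) • ((W ^ (k+1)) u₀) := by
        rw [hcW₂, ha₂n, map_smul, ← hWz, ← hWsucc]
      rw [this]
      exact Submodule.smul_mem _ _ (Submodule.subset_span (hmemu (k+1)))
  have h3 : ∀ x ∈ s₂, adjoint V₁ x ∈ Submodule.span ℂ s₂ := by
    rintro x ⟨k, rfl | rfl⟩
    · cases k with
      | zero =>
        simp only [pow_zero, ContinuousLinearMap.one_apply]
        rw [hbu1]
        exact Submodule.zero_mem _
      | succ k =>
        have : adjoint V₁ ((W ^ (k+1)) u₀) = V₂ ((W ^ k) u₀) := by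
          rw [hWsucc', hb₁W]
        rw [this]
        exact h2 _ (hmemu k)
    · cases k with
      | zero =>
        simp only [pow_zero, ContinuousLinearMap.one_apply]
        rw [hb1n₀]
        exact Submodule.smul_mem _ _ (Submodule.subset_span hu₀s)
      | succ k =>
        have : adjoint V₁ ((W ^ (k+1)) n₀) = V₂ ((W ^ k) n₀) := by
          rw [hWsucc', hb₁W]
        rw [this]
        exact h2 _ (hmemn k)
  have h4 : ∀ x ∈ s₂, adjoint V₂ x ∈ Submodule.span ℂ s₂ := by
    rintro x ⟨k, rfl | rfl⟩
    · cases k with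
      | zero =>
        simp only [pow_zero, ContinuousLinearMap.one_apply]
        rw [hbu2]
        exact Submodule.zero_mem _
      | succ k =>
        have : adjoint V₂ ((W ^ (k+1)) u₀) = V₁ ((W ^ k) u₀) := by
          rw [hWsucc', hb₂W]
        rw [this]
        exact h1 _ (hmemu k)
    · cases k with
      | zero =>
        simp only [pow_zero, ContinuousLinearMap.one_apply]
        rw [hb2n]
        exact Submodule.subset_span hu₀s
      | succ k =>
        have : adjoint V₂ ((W ^ (k+1)) n₀) = V₁ ((W ^ k) n₀) := by
          rw [hWsucc', hb₂W]
        rw [this]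
        exact h1 _ (hmemn k)
  have hdense := engine hirr s₂ h1 h2 h3 h4 u₀ hu₀s hu₀0
  have hmaps : ∀ x ∈ s₂, defectOp V₁ V₂ x ∈ Submodule.span ℂ ({u₀, n₀} : Set H) := by
    rintro x ⟨k, rfl | rfl⟩
    · cases k with
      | zero =>
        simp only [pow_zero, ContinuousLinearMap.one_apply]
        have : defectOp V₁ V₂ u₀ = u₀ := hfixE u₀ hu₀E
        rw [this]
        exact Submodule.subset_span (Set.mem_insert _ _)
      | succ k =>
        rw [hWsucc', hWz, pCV hp]
        exact Submodule.zero_mem _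
    · cases k with
      | zero =>
        simp only [pow_zero, ContinuousLinearMap.one_apply]
        have : defectOp V₁ V₂ n₀ = -n₀ := hCn₀
        rw [this]
        exact Submodule.neg_mem _
          (Submodule.subset_span (Set.mem_insert_of_mem _ rfl))
      | succ k =>
        rw [hWsucc', hWz, pCV hp]
        exact Submodule.zero_mem _
  have hle := trap s₂ {u₀, n₀} (Set.toFinite _) (defectOp V₁ V₂) hmaps hdense
  have hr2 := rank_le_two_of_range_le (defectOp V₁ V₂) u₀ n₀ hle
  rw [← hRdef] at hr2
  rw [hrank] at hr2
  norm_num at hr2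

end Cases

section Glue
variable {V₁ V₂ : H →L[ℂ] H}

lemma iso_mul (V : H →L[ℂ] H) (h : ∀ x : H, ‖V x‖ = ‖x‖) : adjoint V * V = 1 := by
  have hz : ∀ x : H, ⟪((adjoint V ∘L V - 1 : H →L[ℂ] H) : H →ₗ[ℂ] H) x, x⟫ = 0 := by
    intro x
    simp only [ContinuousLinearMap.coe_coe, ContinuousLinearMap.sub_apply,
      ContinuousLinearMap.comp_apply, ContinuousLinearMap.one_apply]
    rw [inner_sub_left, adjoint_inner_left, inner_self_eq_norm_sq_to_K,
      inner_self_eq_norm_sq_to_K, h]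
    ring
  have h0 := (inner_map_self_eq_zero _).mp hz
  have hCLM : (adjoint V ∘L V - 1 : H →L[ℂ] H) = 0 := by
    ext x
    exact DFunLike.congr_fun h0 x
  have := sub_eq_zero.mp hCLM
  rw [← ContinuousLinearMap.mul_def] at this
  exact this

lemma goodPair_of (h3 : IsNFinitePair 3 V₁ V₂) : GoodPair V₁ V₂ := by
  obtain ⟨⟨⟨⟨hiso1, hiso2, hcomm⟩, _⟩, _, hnormal⟩, _⟩ := h3
  refine ⟨?_, iso_mul V₁ hiso1, iso_mul V₂ hiso2, ?_⟩
  · rw [← ContinuousLinearMap.mul_def, ← ContinuousLinearMap.mul_def] at hcomm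
    exact hcomm
  · rw [← ContinuousLinearMap.mul_def, ← ContinuousLinearMap.mul_def] at hnormal
    exact hnormal

end Glue




end Stmt8Aux

/-- For an irreducible `3`-finite pair, the cross-commutator has
rank one and its range is `E₁ = ker (C(V₁,V₂) - I)`. -/
theorem stmt_8 {H : Type*} [NormedAddCommGroup H] [InnerProductSpace ℂ H] [CompleteSpace H]
    (V₁ V₂ : H →L[ℂ] H)
    (hirr : IsIrreduciblePair V₁ V₂)
    (h3 : IsNFinitePair 3 V₁ V₂) :
    Module.rank ℂ (LinearMap.range (crossComm V₁ V₂ : H →ₗ[ℂ] H)) = 1 ∧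
      LinearMap.range (crossComm V₁ V₂ : H →ₗ[ℂ] H) = LinearMap.ker ((defectOp V₁ V₂ - 1 : H →L[ℂ] H) : H →ₗ[ℂ] H) := by
  have hp : GoodPair V₁ V₂ := goodPair_of h3
  have hrank : Module.rank ℂ (LinearMap.range (defectOp V₁ V₂ : H →ₗ[ℂ] H)) = 3 := by
    have := h3.2
    exact_mod_cast this
  have hreq := range_crossComm_eq hp hirr hrank
  refine ⟨?_, hreq⟩
  -- finite dimensionality bookkeeping
  have hrank' : Module.rank ℂ (LinearMap.range (defectOp V₁ V₂ : H →ₗ[ℂ] H)) = ((3:ℕ) : Cardinal) := by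
    exact_mod_cast hrank
  haveI hfinC : FiniteDimensional ℂ (LinearMap.range (defectOp V₁ V₂ : H →ₗ[ℂ] H)) :=
    Module.finite_of_rank_eq_nat hrank'
  have hfinrankC : Module.finrank ℂ (LinearMap.range (defectOp V₁ V₂ : H →ₗ[ℂ] H)) = 3 := by
    have := Module.finrank_eq_rank ℂ (LinearMap.range (defectOp V₁ V₂ : H →ₗ[ℂ] H))
    rw [hrank'] at this
    exact_mod_cast this
  have hker_le : LinearMap.ker ((defectOp V₁ V₂ - 1 : H →L[ℂ] H) : H →ₗ[ℂ] H) ≤ LinearMap.range (defectOp V₁ V₂ : H →ₗ[ℂ] H) := by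
    intro x hx
    rw [mem_ker_sub_one_iff] at hx
    exact ⟨x, hx⟩
  haveI : FiniteDimensional ℂ (LinearMap.ker ((defectOp V₁ V₂ - 1 : H →L[ℂ] H) : H →ₗ[ℂ] H)) :=
    Submodule.finiteDimensional_of_le hker_le
  have hle3 : Module.finrank ℂ (LinearMap.ker ((defectOp V₁ V₂ - 1 : H →L[ℂ] H) : H →ₗ[ℂ] H)) ≤ 3 := by
    rw [← hfinrankC]
    exact Submodule.finrank_mono hker_le
  interval_cases ha : Module.finrank ℂ (LinearMap.ker ((defectOp V₁ V₂ - 1 : H →L[ℂ] H) : H →ₗ[ℂ] H))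
  · exact absurd ha (by
      intro h
      exact case_a0 hp hirr hrank ((Submodule.finrank_eq_zero).mp h))
  · rw [hreq]
    have := Module.finrank_eq_rank ℂ (LinearMap.ker ((defectOp V₁ V₂ - 1 : H →L[ℂ] H) : H →ₗ[ℂ] H))
    rw [ha] at this
    exact_mod_cast this.symm
  · exact absurd ha (fun h => case_a2 hp hirr hrank h)
  · exact absurd ha (fun h => case_a3 hp hirr hrank h)
end

section
/- Let V be a shift on a nonzero complex Hilbert space H with dim ker V* = 1, and let α ∈ ℂ with |α| = 1. Then the pair (V, conj(α)·V) is an irreducible 2-finite pair; moreover σ(C(V, conj(α)V)) \ {0} = {1, −1} and σ([(conj(α)V)*, V]) \ {0} = {α}. -/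
open ContinuousLinearMap

section Helpers

open Filter

variable {H : Type*} [NormedAddCommGroup H] [InnerProductSpace ℂ H] [CompleteSpace H]

private lemma adj_comp_self' (V : H →L[ℂ] H) (h : ∀ x, ‖V x‖ = ‖x‖) :
    adjoint V ∘L V = 1 := by
  ext x
  refine ext_inner_right ℂ fun y => ?_
  calc inner ℂ ((adjoint V ∘L V) x) y = inner ℂ ((adjoint V) (V x)) y := rfl
    _ = inner ℂ (V x) (V y) := adjoint_inner_left V y (V x)
    _ = (inner ℂ x y : ℂ) := LinearIsometry.inner_map_map ⟨V.toLinearMap, h⟩ x y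
    _ = inner ℂ ((1 : H →L[ℂ] H) x) y := rfl

private lemma mem_spec_of_eig' (T : H →L[ℂ] H) (l : ℂ) (x : H) (hx : x ≠ 0)
    (h : T x = l • x) : l ∈ spectrum ℂ T := by
  rw [spectrum.mem_iff]
  intro hu
  have h0 : (algebraMap ℂ (H →L[ℂ] H) l - T) x = 0 := by
    simp [Algebra.algebraMap_eq_smul_one, sub_apply, smul_apply, one_apply, h]
  have := congrArg (fun A : H →L[ℂ] H => A x) hu.unit.inv_mul
  simp only [mul_apply_eq_comp, hu.unit_spec, h0, map_zero, one_apply_eq_self] at this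
  exact hx this.symm

private lemma unit_of_cubic' {A : Type*} [Ring A] [Algebra ℂ A] (a : A) (h : a * a * a = a)
    (l : ℂ) (hl : l ^ 3 - l ≠ 0) : IsUnit (algebraMap ℂ A l - a) := by
  have h3 : a * (a * a) = a := by rw [← mul_assoc, h]
  set b : A := (l ^ 3 - l)⁻¹ • (algebraMap ℂ A (l ^ 2) + l • a + a * a - 1) with hb
  have key : ∀ c d : A, c = algebraMap ℂ A l - a → d = algebraMap ℂ A (l ^ 2) + l • a + a * a - 1 →
      c * d = (l ^ 3 - l) • 1 ∧ d * c = (l ^ 3 - l) • 1 := by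
    intro c d hc hd
    subst hc hd
    constructor <;>
    · simp only [Algebra.algebraMap_eq_smul_one]
      simp only [mul_sub, sub_mul, mul_add, add_mul, smul_mul_assoc, mul_smul_comm,
        one_mul, mul_one, smul_smul, mul_assoc, h, h3]
      match_scalars <;> ring
  obtain ⟨k1, k2⟩ := key _ _ rfl rfl
  refine ⟨⟨algebraMap ℂ A l - a, b, ?_, ?_⟩, rfl⟩
  · rw [hb, mul_smul_comm, k1, smul_smul, inv_mul_cancel₀ hl, one_smul]
  · rw [hb, smul_mul_assoc, k2, smul_smul, inv_mul_cancel₀ hl, one_smul]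

private lemma unit_of_quadratic' {A : Type*} [Ring A] [Algebra ℂ A] (a : A) (m : ℂ)
    (h : a * a = m • a) (l : ℂ) (hl : l * (l - m) ≠ 0) :
    IsUnit (algebraMap ℂ A l - a) := by
  set b : A := (l * (l - m))⁻¹ • (algebraMap ℂ A l + a - m • 1) with hb
  have key : ∀ c d : A, c = algebraMap ℂ A l - a → d = algebraMap ℂ A l + a - m • 1 →
      c * d = (l * (l - m)) • 1 ∧ d * c = (l * (l - m)) • 1 := by
    intro c d hc hd
    subst hc hd
    constructor <;>
    · simp only [Algebra.algebraMap_eq_smul_one]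
      simp only [mul_sub, sub_mul, mul_add, add_mul, smul_mul_assoc, mul_smul_comm,
        one_mul, mul_one, smul_smul, h]
      match_scalars <;> ring
  obtain ⟨k1, k2⟩ := key _ _ rfl rfl
  refine ⟨⟨algebraMap ℂ A l - a, b, ?_, ?_⟩, rfl⟩
  · rw [hb, mul_smul_comm, k1, smul_smul, inv_mul_cancel₀ hl, one_smul]
  · rw [hb, smul_mul_assoc, k2, smul_smul, inv_mul_cancel₀ hl, one_smul]

private lemma pow_isom' (V : H →L[ℂ] H) (h : ∀ x, ‖V x‖ = ‖x‖) (n : ℕ) :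
    ∀ x : H, ‖(V ^ n) x‖ = ‖x‖ := by
  induction n with
  | zero => simp
  | succ n ih => intro x; rw [pow_succ, mul_apply_eq_comp, ih, h]

private lemma vanish' (V : H →L[ℂ] H) (hV : IsShift V) (y : H)
    (hy : ∀ n : ℕ, ((1 : H →L[ℂ] H) - V ∘L adjoint V) ((adjoint V ^ n) y) = 0) : y = 0 := by
  set W := adjoint V with hW
  have key : ∀ n : ℕ, (V ^ n) ((W ^ n) y) = y := by
    intro n
    induction n with
    | zero => simp
    | succ n ih =>
      have h0 := hy n
      simp only [sub_apply, one_apply_eq_self, comp_apply, sub_eq_zero] at h0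
      simp only [pow_succ V, pow_succ' W, mul_apply_eq_comp]
      rw [← h0, ih]
  have hnorm : ∀ n : ℕ, ‖(W ^ n) y‖ = ‖y‖ := fun n => by
    calc ‖(W ^ n) y‖ = ‖(V ^ n) ((W ^ n) y)‖ := (pow_isom' V hV.1 n _).symm
      _ = ‖y‖ := by rw [key n]
  have h2 : Tendsto (fun n : ℕ => ‖(W ^ n) y‖) atTop (nhds 0) :=
    tendsto_zero_iff_norm_tendsto_zero.mp (hV.2 y)
  have := tendsto_nhds_unique (h2.congr fun n => (hnorm n)) tendsto_const_nhds
  simpa [norm_eq_zero] using this.symm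

private lemma rank_span_pair' (e f : H) (he : ‖e‖ = 1) (hf : ‖f‖ = 1)
    (hef : (inner ℂ e f : ℂ) = 0) :
    Module.rank ℂ (Submodule.span ℂ ({e, f} : Set H)) = 2 := by
  classical
  have hne : e ≠ f := by
    intro h
    rw [h, inner_self_eq_norm_sq_to_K, hf] at hef
    norm_num at hef
  have hfe : (inner ℂ f e : ℂ) = 0 := by rw [← inner_conj_symm, hef, map_zero]
  have horto : Orthonormal ℂ (fun x => x : ({e, f} : Set H) → H) := by
    rw [orthonormal_subtype_iff_ite]
    intro v hv w hw
    rcases hv with rfl | hv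
    · rcases hw with rfl | hw
      · simp [inner_self_eq_norm_sq_to_K, he]
      · simp only [Set.mem_singleton_iff] at hw; subst hw
        simp [hne, hef]
    · simp only [Set.mem_singleton_iff] at hv; subst hv
      rcases hw with rfl | hw
      · rw [if_neg hne.symm]; exact hfe
      · simp only [Set.mem_singleton_iff] at hw; subst hw
        simp [inner_self_eq_norm_sq_to_K, hf]
  rw [rank_span_set horto.linearIndependent]
  rw [Cardinal.mk_insert (by simpa using hne), Cardinal.mk_singleton]
  norm_num

private lemma compact_of_rank_one' (T : H →L[ℂ] H) (e : H) (he : ‖e‖ = 1)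
    (h : ∀ x, ∃ c : ℂ, T x = c • e) : IsCompactOperator ⇑T := by
  refine ⟨(fun c : ℂ => c • e) '' Metric.closedBall 0 ‖T‖,
    (isCompact_closedBall 0 ‖T‖).image (continuous_id.smul continuous_const), ?_⟩
  have hsub : Metric.ball (0 : H) 1 ⊆
      ⇑T ⁻¹' ((fun c : ℂ => c • e) '' Metric.closedBall 0 ‖T‖) := by
    intro x hx
    obtain ⟨c, hc⟩ := h x
    refine ⟨c, ?_, hc.symm⟩
    rw [Metric.mem_closedBall, dist_zero_right]
    have h3 : ‖x‖ ≤ 1 := by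
      rw [Metric.mem_ball, dist_zero_right] at hx; exact hx.le
    calc ‖c‖ = ‖T x‖ := by rw [hc, norm_smul, he, mul_one]
      _ ≤ ‖T‖ * ‖x‖ := T.le_opNorm x
      _ ≤ ‖T‖ * 1 := by gcongr
      _ = ‖T‖ := mul_one _
  exact Filter.mem_of_superset (Metric.ball_mem_nhds 0 one_pos) hsub

end Helpers

/-- Conversely, if `V` is a shift with one-dimensional `ker V*` on a
nonzero Hilbert space and `|α| = 1`, then `(V, conj α • V)` is an irreducible `2`-finite
pair with `σ(C) \ {0} = {1,-1}` and `σ([(conj α • V)*, V]) \ {0} = {α}`. -/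
theorem stmt_13 {H : Type*} [NormedAddCommGroup H] [InnerProductSpace ℂ H] [CompleteSpace H] [Nontrivial H]
    (V : H →L[ℂ] H)
    (hV : IsShift V)
    (hker : Module.rank ℂ (LinearMap.ker (adjoint V : H →ₗ[ℂ] H)) = 1)
    (α : ℂ) (hα : ‖α‖ = 1) :
    IsIrreduciblePair V ((starRingEnd ℂ) α • V) ∧
      IsNFinitePair 2 V ((starRingEnd ℂ) α • V) ∧
      spectrum ℂ (defectOp V ((starRingEnd ℂ) α • V)) \ {0} = {1, -1} ∧
      spectrum ℂ (crossComm V ((starRingEnd ℂ) α • V)) \ {0} = {α} := by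
  classical
  set W := adjoint V with hWdef
  have hα0 : α ≠ 0 := by
    intro h; rw [h] at hα; simp at hα
  have hα1 : (starRingEnd ℂ) α * α = 1 := by
    have hns : (Complex.normSq α : ℂ) = 1 := by
      rw [Complex.normSq_eq_norm_sq, hα]; norm_num
    rw [mul_comm, Complex.mul_conj, hns]
  have hα1' : α * (starRingEnd ℂ) α = 1 := by rw [mul_comm]; exact hα1
  have hcα : ‖(starRingEnd ℂ) α‖ = 1 := by
    rw [RCLike.norm_conj, hα]
  have h1 : W ∘L V = 1 := adj_comp_self' V hV.1
  have h1m : W * V = 1 := h1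
  set P : H →L[ℂ] H := 1 - V * W with hPdef
  have hPV : P * V = 0 := by
    have : P * V = V - V * (W * V) := by rw [hPdef]; noncomm_ring
    rw [this, h1m, mul_one, sub_self]
  have hWP : W * P = 0 := by
    have : W * P = W - (W * V) * W := by rw [hPdef]; noncomm_ring
    rw [this, h1m, one_mul, sub_self]
  have hPP : P * P = P := by
    have : P * P = P - (P * V) * W := by rw [hPdef]; noncomm_ring
    rw [this, hPV, zero_mul, sub_zero]
  set Q : H →L[ℂ] H := V * P * W with hQdef
  have hPQ : P * Q = 0 := by
    have : P * Q = (P * V) * (P * W) := by rw [hQdef]; noncomm_ring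
    rw [this, hPV, zero_mul]
  have hQP : Q * P = 0 := by
    have : Q * P = (V * P) * (W * P) := by rw [hQdef]; noncomm_ring
    rw [this, hWP, mul_zero]
  have hQQ : Q * Q = Q := by
    have h' : Q * Q = V * ((P * (W * V)) * (P * W)) := by rw [hQdef]; noncomm_ring
    rw [h', h1m, mul_one, show P * (P * W) = (P * P) * W from (mul_assoc _ _ _).symm, hPP,
      hQdef, mul_assoc]
  set D : H →L[ℂ] H := P - Q with hDdef0
  have hD2 : D * D = P + Q := by
    have : D * D = P * P - P * Q - Q * P + Q * Q := by rw [hDdef0]; noncomm_ring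
    rw [this, hPP, hPQ, hQP, hQQ, sub_zero, sub_zero]
  have hD3 : D * D * D = D := by
    have h' : (P + Q) * (P - Q) = P * P - P * Q + Q * P - Q * Q := by noncomm_ring
    rw [hD2, hDdef0, h', hPP, hPQ, hQP, hQQ, sub_zero, add_zero]
  have hadj : adjoint ((starRingEnd ℂ) α • V) = α • W := by
    rw [hWdef, ← star_eq_adjoint, ← star_eq_adjoint, star_smul, RCLike.star_def,
      Complex.conj_conj]
  have hDeq : defectOp V ((starRingEnd ℂ) α • V) = D := by
    rw [defectOp, hadj, hDdef0, hQdef, hPdef]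
    simp only [← ContinuousLinearMap.mul_def, smul_mul_assoc, mul_smul_comm, smul_smul,
      hα1, hα1', one_smul]
    noncomm_ring
  have hCeq : crossComm V ((starRingEnd ℂ) α • V) = α • P := by
    rw [crossComm, hadj, hPdef]
    simp only [← ContinuousLinearMap.mul_def, smul_mul_assoc, mul_smul_comm, h1m, smul_sub]
  -- the distinguished unit vector spanning ker W
  obtain ⟨v₀, hv₀ne, hv₀span⟩ := rank_eq_one_iff.mp hker
  set e₀ : H := (v₀ : H) with he₀def
  have he₀ne : e₀ ≠ 0 := fun h => hv₀ne (Subtype.ext h)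
  have he₀ker : W e₀ = 0 := LinearMap.mem_ker.mp v₀.2
  set e : H := ((‖e₀‖ : ℂ))⁻¹ • e₀ with hedef
  have hnorme₀ : (‖e₀‖ : ℂ) ≠ 0 := by
    simpa using norm_ne_zero_iff.mpr he₀ne
  have he : ‖e‖ = 1 := by
    rw [hedef, norm_smul, norm_inv, Complex.norm_real, norm_norm,
      inv_mul_cancel₀ (norm_ne_zero_iff.mpr he₀ne)]
  have hene : e ≠ 0 := by
    intro h; rw [h, norm_zero] at he; norm_num at he
  have hWe : W e = 0 := by rw [hedef, map_smul, he₀ker, smul_zero]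
  have hkerspan : ∀ z : H, W z = 0 → ∃ c : ℂ, z = c • e := by
    intro z hz
    obtain ⟨r, hr⟩ := hv₀span ⟨z, LinearMap.mem_ker.mpr hz⟩
    refine ⟨r * ‖e₀‖, ?_⟩
    have : r • e₀ = z := congrArg Subtype.val hr
    rw [← this, hedef, smul_smul, mul_assoc, mul_inv_cancel₀ hnorme₀, mul_one]
  have hPrange : ∀ z : H, ∃ c : ℂ, P z = c • e := by
    intro z
    apply hkerspan
    have := congrArg (fun A : H →L[ℂ] H => A z) hWP
    simpa [mul_apply_eq_comp] using this
  -- pointwise values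
  have hPe : P e = e := by
    rw [hPdef]; simp [sub_apply, one_apply_eq_self, mul_apply_eq_comp, hWe]
  have hPVx : ∀ x : H, P (V x) = 0 := by
    intro x
    have := congrArg (fun A : H →L[ℂ] H => A x) hPV
    simpa [mul_apply_eq_comp] using this
  have hWVx : ∀ x : H, W (V x) = x := by
    intro x
    have := congrArg (fun A : H →L[ℂ] H => A x) h1m
    simpa [mul_apply_eq_comp] using this
  have hVe : ‖V e‖ = 1 := by rw [hV.1, he]
  have hVene : V e ≠ 0 := by
    intro h; rw [h, norm_zero] at hVe; norm_num at hVe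
  have hinner : (inner ℂ e (V e) : ℂ) = 0 := by
    rw [← adjoint_inner_left V e e, ← hWdef, hWe, inner_zero_left]
  have hDe : D e = (1 : ℂ) • e := by
    rw [hDdef0, one_smul]
    simp only [sub_apply, hQdef, mul_apply_eq_comp, hWe, map_zero, hPe]
    simp
  have hDVe : D (V e) = (-1 : ℂ) • (V e) := by
    rw [hDdef0]
    simp only [sub_apply, hQdef, mul_apply_eq_comp, hWVx, hPVx, hPe]
    simp
  have hCe : (α • P) e = α • e := by rw [smul_apply, hPe]
    -- spectrum of the defect operator
  have hspecD : spectrum ℂ (defectOp V ((starRingEnd ℂ) α • V)) \ {0} = {1, -1} := by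
    rw [hDeq]
    ext l
    simp only [Set.mem_diff, Set.mem_singleton_iff, Set.mem_insert_iff]
    constructor
    · rintro ⟨hl, hl0⟩
      by_contra hcon
      push_neg at hcon
      obtain ⟨hl1, hlm1⟩ := hcon
      have hlp1 : l + 1 ≠ 0 := fun h => hlm1 (by linear_combination h)
      have hne : l ^ 3 - l ≠ 0 := by
        have : l ^ 3 - l = l * ((l - 1) * (l + 1)) := by ring
        rw [this]
        exact mul_ne_zero hl0 (mul_ne_zero (sub_ne_zero.mpr hl1) hlp1)
      exact (spectrum.notMem_iff.mpr (unit_of_cubic' D hD3 l hne)) hl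
    · rintro (rfl | rfl)
      · exact ⟨mem_spec_of_eig' D 1 e hene hDe, one_ne_zero⟩
      · exact ⟨mem_spec_of_eig' D (-1) (V e) hVene hDVe, by norm_num⟩
  -- spectrum of the cross-commutator
  have hCsq : (α • P) * (α • P) = α • (α • P) := by
    rw [smul_mul_assoc, mul_smul_comm, hPP]
  have hspecC : spectrum ℂ (crossComm V ((starRingEnd ℂ) α • V)) \ {0} = {α} := by
    rw [hCeq]
    ext l
    simp only [Set.mem_diff, Set.mem_singleton_iff]
    constructor
    · rintro ⟨hl, hl0⟩
      by_contra hlα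
      have hne : l * (l - α) ≠ 0 := mul_ne_zero hl0 (sub_ne_zero.mpr hlα)
      exact (spectrum.notMem_iff.mpr (unit_of_quadratic' (α • P) α hCsq l hne)) hl
    · rintro rfl
      exact ⟨mem_spec_of_eig' _ _ e hene hCe, hα0⟩
  -- range of the defect operator
  have hrange : LinearMap.range (defectOp V ((starRingEnd ℂ) α • V) : H →ₗ[ℂ] H) =
      Submodule.span ℂ ({e, V e} : Set H) := by
    apply le_antisymm
    · rintro x ⟨y, rfl⟩
      obtain ⟨a, ha⟩ := hPrange y
      obtain ⟨b, hb⟩ := hPrange (W y)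
      have : defectOp V ((starRingEnd ℂ) α • V) y = a • e + (-b) • (V e) := by
        rw [hDeq, hDdef0, sub_apply, hQdef, mul_apply_eq_comp, mul_apply_eq_comp, ha, hb, map_smul]
        module
      rw [ContinuousLinearMap.coe_coe, this]
      exact Submodule.add_mem _
        (Submodule.smul_mem _ a (Submodule.subset_span (Set.mem_insert _ _)))
        (Submodule.smul_mem _ (-b) (Submodule.subset_span (by simp)))
    · rw [Submodule.span_le]
      rintro x hx
      rcases hx with rfl | hx
      · exact ⟨e, by rw [hDeq]; simpa using hDe⟩
      · simp only [Set.mem_singleton_iff] at hx; subst hx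
        refine ⟨-(V e), ?_⟩
        rw [hDeq, map_neg, ContinuousLinearMap.coe_coe, hDVe]
        simp
  have hrank : Module.rank ℂ (LinearMap.range (defectOp V ((starRingEnd ℂ) α • V) : H →ₗ[ℂ] H)) = 2 := by
    rw [hrange]
    exact rank_span_pair' e (V e) he hVe hinner
  -- the isometric pair
  have hisom2 : ∀ x : H, ‖((starRingEnd ℂ) α • V) x‖ = ‖x‖ := by
    intro x
    rw [smul_apply, norm_smul, hcα, one_mul, hV.1]
  have hcomm : V ∘L ((starRingEnd ℂ) α • V) = ((starRingEnd ℂ) α • V) ∘L V := by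
    rw [comp_smul, smul_comp]
  -- the product is a shift
  have hprod : IsShift (V ∘L ((starRingEnd ℂ) α • V)) := by
    constructor
    · intro x
      rw [comp_apply, hV.1, hisom2]
    · intro x
      have hadjU : adjoint (V ∘L ((starRingEnd ℂ) α • V)) = α • (W * W) := by
        rw [← star_eq_adjoint, ← ContinuousLinearMap.mul_def, star_mul, star_smul,
          RCLike.star_def, Complex.conj_conj, smul_mul_assoc, star_eq_adjoint,
          ← hWdef]
      have heq : ∀ n : ℕ, (adjoint (V ∘L ((starRingEnd ℂ) α • V)) ^ n) x
          = α ^ n • (W ^ (2 * n)) x := by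
        intro n
        rw [hadjU, smul_pow, smul_apply, pow_mul, sq]
      have h2n : Filter.Tendsto (fun n : ℕ => 2 * n) Filter.atTop Filter.atTop :=
        Filter.tendsto_atTop_atTop_of_monotone (fun a b h => by omega) (fun b => ⟨b, by omega⟩)
      have hWn : Filter.Tendsto (fun n : ℕ => (W ^ (2 * n)) x) Filter.atTop (nhds 0) :=
        (hV.2 x).comp h2n
      have hn := tendsto_zero_iff_norm_tendsto_zero.mp hWn
      refine tendsto_zero_iff_norm_tendsto_zero.mpr (hn.congr fun n => ?_)
      rw [heq n, norm_smul, norm_pow, hα, one_pow, one_mul]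
  -- compactness of the cross-commutator
  have hcpt : IsCompactOperator ⇑(crossComm V ((starRingEnd ℂ) α • V)) := by
    apply compact_of_rank_one' _ e he
    intro x
    obtain ⟨c, hc⟩ := hPrange x
    exact ⟨α * c, by rw [hCeq, smul_apply, hc, smul_smul]⟩
  -- normality of the cross-commutator
  have hstarP : star P = P := by
    rw [hPdef, star_sub, star_one, star_mul, star_eq_adjoint, star_eq_adjoint,
      hWdef, adjoint_adjoint, ← hWdef]
  have hnormal : crossComm V ((starRingEnd ℂ) α • V) ∘L adjoint (crossComm V ((starRingEnd ℂ) α • V)) =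
      adjoint (crossComm V ((starRingEnd ℂ) α • V)) ∘L crossComm V ((starRingEnd ℂ) α • V) := by
    have hadjC : adjoint (crossComm V ((starRingEnd ℂ) α • V)) = (starRingEnd ℂ) α • P := by
      rw [hCeq, ← star_eq_adjoint, star_smul, RCLike.star_def, hstarP]
    rw [hadjC, hCeq]
    simp only [← ContinuousLinearMap.mul_def, smul_mul_assoc, mul_smul_comm, smul_smul,
      hα1, hα1']
  -- irreducibility
  have hirr : IsIrreduciblePair V ((starRingEnd ℂ) α • V) := by
    intro S hScl hred
    obtain ⟨hS1, -, hS3, -⟩ := hred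
    haveI : CompleteSpace S := hScl.completeSpace_coe
    have hSW : ∀ x ∈ S, W x ∈ S := fun x hx => hS3 x hx
    have hSP : ∀ x ∈ S, P x ∈ S := by
      intro x hx
      rw [hPdef]
      simp only [sub_apply, one_apply_eq_self, mul_apply_eq_comp]
      exact Submodule.sub_mem _ hx (hS1 _ (hSW _ hx))
    have hSWn : ∀ (n : ℕ), ∀ x ∈ S, (W ^ n) x ∈ S := by
      intro n
      induction n with
      | zero => intro x hx; simpa using hx
      | succ n ih =>
        intro x hx
        rw [pow_succ, mul_apply_eq_comp]
        exact ih _ (hSW _ hx)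
    -- the orthogonal complement is also invariant
    have hOV : ∀ y ∈ Sᗮ, V y ∈ Sᗮ := by
      intro y hy
      rw [Submodule.mem_orthogonal] at hy ⊢
      intro u hu
      rw [← adjoint_inner_left V y u, ← hWdef]
      exact hy _ (hSW _ hu)
    have hOW : ∀ y ∈ Sᗮ, W y ∈ Sᗮ := by
      intro y hy
      rw [Submodule.mem_orthogonal] at hy ⊢
      intro u hu
      rw [hWdef, adjoint_inner_right]
      exact hy _ (hS1 _ hu)
    have hOP : ∀ y ∈ Sᗮ, P y ∈ Sᗮ := by
      intro y hy
      rw [hPdef]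
      simp only [sub_apply, one_apply_eq_self, mul_apply_eq_comp]
      exact Submodule.sub_mem _ hy (hOV _ (hOW _ hy))
    have hOWn : ∀ (n : ℕ), ∀ y ∈ Sᗮ, (W ^ n) y ∈ Sᗮ := by
      intro n
      induction n with
      | zero => intro y hy; simpa using hy
      | succ n ih =>
        intro y hy
        rw [pow_succ, mul_apply_eq_comp]
        exact ih _ (hOW _ hy)
    by_cases hc : ∀ x ∈ S, P x = 0
    · left
      rw [Submodule.eq_bot_iff]
      intro x hx
      apply vanish' V hV x
      intro n
      have hxn : (W ^ n) x ∈ S := hSWn n x hx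
      exact hc _ hxn
    · right
      push_neg at hc
      obtain ⟨x, hxS, hPx⟩ := hc
      obtain ⟨c, hcx⟩ := hPrange x
      have hcne : c ≠ 0 := by
        intro h; rw [h, zero_smul] at hcx; exact hPx hcx
      have heS : e ∈ S := by
        have : c⁻¹ • P x ∈ S := Submodule.smul_mem _ _ (hSP _ hxS)
        rwa [hcx, smul_smul, inv_mul_cancel₀ hcne, one_smul] at this
      have hObot : Sᗮ = ⊥ := by
        rw [Submodule.eq_bot_iff]
        intro y hy
        apply vanish' V hV y
        intro n
        have hyn : (W ^ n) y ∈ Sᗮ := hOWn n y hy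
        -- P of an element of Sᗮ lies in both S (as a multiple of e) and Sᗮ
        obtain ⟨d, hd⟩ := hPrange ((W ^ n) y)
        have hmem1 : P ((W ^ n) y) ∈ S := by
          rw [hd]; exact Submodule.smul_mem _ _ heS
        have hmem2 : P ((W ^ n) y) ∈ Sᗮ := hOP _ hyn
        have : P ((W ^ n) y) = 0 := by
          have h0 := (Submodule.mem_orthogonal _ _).mp hmem2 _ hmem1
          rwa [inner_self_eq_zero] at h0
        exact this
      rw [← Submodule.orthogonal_orthogonal S, hObot, Submodule.bot_orthogonal_eq_top]
  refine ⟨hirr, ⟨⟨⟨⟨hV.1, hisom2, hcomm⟩, hprod⟩, hcpt, hnormal⟩, ?_⟩, hspecD, hspecC⟩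
  rw [hrank]
  norm_num
end
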